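/- arXiv:1011.5001 — 3 statements merged into one kernel-verified Lean document; each statement's English description precedes it below -/
import Mathlib

section
/- For every n ≥ 1 and all partitions ν, ρ of n, the number of locally orientable partitioned hypermaps of type (ν,ρ) satisfies LP^n_{ν,ρ} = Σ_{λ,μ ⊢ n} R̄_{λ,ν} · R̄_{μ,ρ} · L^n_{λ,μ}, where the sum is over all pairs of partitions λ, μ of n (only refinements λ of ν and μ of ρ contribute). -/
open scoped BigOperators

/-- The ground set `{1,…,2n}` encoding `[n] ∪ [n̂]`: the non-hat number `i` is
encoded as `2i−1` (odd) and the hat number `î` as `2i` (even). -/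
def groundSet (n : ℕ) : Finset ℕ := Finset.Icc 1 (2 * n)

/-- The pairing `f₁ = (1 n̂)(2 1̂)(3 2̂)⋯(n n−1̂)`: swaps `2j` and `2j+1` for
`1 ≤ j ≤ n−1`, and swaps `2n` and `1`. -/
def f1 (n : ℕ) : ℕ → ℕ := fun x =>
  if x = 2 * n then 1
  else if x = 1 then 2 * n
  else if x % 2 = 0 then x + 1 else x - 1

/-- The pairing `f₂ = (1 1̂)(2 2̂)⋯(n n̂)`: swaps `2i−1` and `2i`. -/
def f2 : ℕ → ℕ := fun x => if x % 2 = 0 then x - 1 else x + 1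

/-- A pairing (fixed-point-free involution) of `{1,…,2n}`, encoded as a function
`ℕ → ℕ` that is the identity outside the ground set. -/
def IsPairing (n : ℕ) (f : ℕ → ℕ) : Prop :=
  (∀ x ∈ groundSet n, f x ∈ groundSet n ∧ f (f x) = x ∧ f x ≠ x) ∧
  ∀ x ∉ groundSet n, f x = x

/-- A set partition of `{1,…,2n}` with blocks given as a finite set of finite sets. -/
def IsSetPartition (n : ℕ) (π : Finset (Finset ℕ)) : Prop :=
  (∀ B ∈ π, B.Nonempty) ∧ (∀ B ∈ π, B ⊆ groundSet n) ∧
  ∀ x ∈ groundSet n, ∃! B, B ∈ π ∧ x ∈ B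

/-- A set `B` is stable under (invariant under) a function `f`. -/
def StableUnder (f : ℕ → ℕ) (B : Finset ℕ) : Prop := ∀ x ∈ B, f x ∈ B

/-- A locally orientable partitioned hypermap: a pairing `f3` together with set
partitions `π1`, `π2` of `{1,…,2n}` such that every block of `π1` is invariant
under `f1` and `f3` and every block of `π2` is invariant under `f2` and `f3`. -/
def IsLOPH (n : ℕ) (f3 : ℕ → ℕ) (π1 π2 : Finset (Finset ℕ)) : Prop :=
  IsPairing n f3 ∧ IsSetPartition n π1 ∧ IsSetPartition n π2 ∧
  (∀ B ∈ π1, StableUnder (f1 n) B ∧ StableUnder f3 B) ∧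
  (∀ B ∈ π2, StableUnder f2 B ∧ StableUnder f3 B)

/-- The maximum non-hat (odd) element of `B` (as a `sup`, which is the maximum
when an odd element exists). -/
def maxOdd (B : Finset ℕ) : ℕ := (B.filter fun x => x % 2 = 1).sup id

/-- The maximum hat (even) element of `B`. -/
def maxEven (B : Finset ℕ) : ℕ := (B.filter fun x => x % 2 = 0).sup id

/-- The number of pairs `{u, f3 u} ⊆ B` with both `u` and `f3 u` non-hat. -/
def nnPairs (f3 : ℕ → ℕ) (B : Finset ℕ) : ℕ :=
  ((B.filter fun u => u % 2 = 1 ∧ f3 u % 2 = 1 ∧ f3 u ∈ B).image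
    fun u => ({u, f3 u} : Finset ℕ)).card

/-- The number of pairs `{u, f3 u} ⊆ B` with both `u` and `f3 u` hat. -/
def hhPairs (f3 : ℕ → ℕ) (B : Finset ℕ) : ℕ :=
  ((B.filter fun u => u % 2 = 0 ∧ f3 u % 2 = 0 ∧ f3 u ∈ B).image
    fun u => ({u, f3 u} : Finset ℕ)).card

/-- For a block `B` of `π1`: the number of pairs `{t, f3 t} ⊆ B` where `t` is the
maximum hat element of some block of `π2` and `f3 t` is also hat. -/
def jCount1 (f3 : ℕ → ℕ) (π2 : Finset (Finset ℕ)) (B : Finset ℕ) : ℕ :=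
  ((B.filter fun t => t % 2 = 0 ∧ f3 t % 2 = 0 ∧ f3 t ∈ B ∧
      ∃ C ∈ π2, t ∈ C ∧ t = maxEven C).image
    fun t => ({t, f3 t} : Finset ℕ)).card

/-- For a block `B` of `π2`: the number of pairs `{t, f3 t} ⊆ B` where `t` is the
maximum non-hat element of some block of `π1` not containing `1` and `f3 t` is
also non-hat. -/
def jCount2 (f3 : ℕ → ℕ) (π1 : Finset (Finset ℕ)) (B : Finset ℕ) : ℕ :=
  ((B.filter fun t => t % 2 = 1 ∧ f3 t % 2 = 1 ∧ f3 t ∈ B ∧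
      ∃ C ∈ π1, 1 ∉ C ∧ t ∈ C ∧ t = maxOdd C).image
    fun t => ({t, f3 t} : Finset ℕ)).card

/-- Number of blocks of `π1` counted by `P` with parameters `(i,j,k)`. -/
def countP (f3 : ℕ → ℕ) (π1 π2 : Finset (Finset ℕ)) (i j k : ℕ) : ℕ :=
  (π1.filter fun B => (1 ∈ B ∨ f3 (maxOdd B) % 2 = 0) ∧ B.card = 2 * i ∧
    jCount1 f3 π2 B = j ∧ nnPairs f3 B = j + k).card

/-- Number of blocks of `π1` counted by `P'` with parameters `(i,j,k)`. -/
def countP' (f3 : ℕ → ℕ) (π1 π2 : Finset (Finset ℕ)) (i j k : ℕ) : ℕ :=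
  (π1.filter fun B => (1 ∉ B ∧ f3 (maxOdd B) % 2 = 1) ∧ B.card = 2 * i ∧
    jCount1 f3 π2 B = j ∧ nnPairs f3 B = j + k).card

/-- Number of blocks of `π2` counted by `Q` with parameters `(i,j,k)`. -/
def countQ (f3 : ℕ → ℕ) (π1 π2 : Finset (Finset ℕ)) (i j k : ℕ) : ℕ :=
  (π2.filter fun B => f3 (maxEven B) % 2 = 1 ∧ B.card = 2 * i ∧
    jCount2 f3 π1 B = j ∧ hhPairs f3 B = j + k).card

/-- Number of blocks of `π2` counted by `Q'` with parameters `(i,j,k)`. -/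
def countQ' (f3 : ℕ → ℕ) (π1 π2 : Finset (Finset ℕ)) (i j k : ℕ) : ℕ :=
  (π2.filter fun B => f3 (maxEven B) % 2 = 0 ∧ B.card = 2 * i ∧
    jCount2 f3 π1 B = j ∧ hhPairs f3 B = j + k).card

/-- `LP(A)`: the number of locally orientable partitioned hypermaps whose block
classification gives exactly the arrays `P, P', Q, Q'`. -/
noncomputable def LP (n : ℕ) (P P' Q Q' : ℕ × ℕ × ℕ → ℕ) : ℕ :=
  Set.ncard { m : (ℕ → ℕ) × Finset (Finset ℕ) × Finset (Finset ℕ) |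
    IsLOPH n m.1 m.2.1 m.2.2 ∧
    ∀ i j k : ℕ,
      countP m.1 m.2.1 m.2.2 i j k = P (i, j, k) ∧
      countP' m.1 m.2.1 m.2.2 i j k = P' (i, j, k) ∧
      countQ m.1 m.2.1 m.2.2 i j k = Q (i, j, k) ∧
      countQ' m.1 m.2.1 m.2.2 i j k = Q' (i, j, k) }

/-- The half-type of a set partition: the multiset of half-cardinalities of its blocks. -/
def halfType (π : Finset (Finset ℕ)) : Multiset ℕ := π.val.map fun B => B.card / 2

/-- `LP^n_{ν,ρ}`: the number of locally orientable partitioned hypermaps of type `(ν,ρ)`. -/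
noncomputable def LPtype (n : ℕ) (ν ρ : Multiset ℕ) : ℕ :=
  Set.ncard { m : (ℕ → ℕ) × Finset (Finset ℕ) × Finset (Finset ℕ) |
    IsLOPH n m.1 m.2.1 m.2.2 ∧ halfType m.2.1 = ν ∧ halfType m.2.2 = ρ }

/-- The forward orbit of `x` under `h` (the full orbit when `h` permutes a finite set). -/
def fwdOrbit (h : ℕ → ℕ) (x : ℕ) : Set ℕ := { y | ∃ m : ℕ, h^[m] x = y }

/-- `h` has cycle type `μ` on `{1,…,2n}` (fixed points counted as parts equal to `1`):
for every `k`, the number of orbits of `h` on the ground set with exactly `k`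
elements equals the multiplicity of `k` in `μ`. -/
def HasCycleTypeOn (n : ℕ) (h : ℕ → ℕ) (μ : Multiset ℕ) : Prop :=
  ∀ k : ℕ,
    ({ S : Set ℕ | (∃ x ∈ groundSet n, S = fwdOrbit h x) ∧ S.ncard = k }).ncard = μ.count k

/-- `L^n_{λ,μ}`: the number of pairings `f3` of `{1,…,2n}` such that `f3∘f1` has
cycle type `λλ` and `f3∘f2` has cycle type `μμ`. -/
noncomputable def Lcount (n : ℕ) (lam mu : Nat.Partition n) : ℕ :=
  Set.ncard { f3 : ℕ → ℕ | IsPairing n f3 ∧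
    HasCycleTypeOn n (f3 ∘ f1 n) (lam.parts + lam.parts) ∧
    HasCycleTypeOn n (f3 ∘ f2) (mu.parts + mu.parts) }

/-- `R̄_{λ,ν}`: the number of set partitions of `{1,…,ℓ(λ)}` whose multiset of
block sums `{Σ_{i∈B} λ_i}` equals the multiset of parts of `ν`. -/
noncomputable def Rbar {n : ℕ} (lam nu : Nat.Partition n) : ℕ :=
  Set.ncard { π : Finset (Finset ℕ) |
    (∀ B ∈ π, B.Nonempty) ∧
    (∀ B ∈ π, B ⊆ Finset.Icc 1 lam.parts.card) ∧
    (∀ x ∈ Finset.Icc 1 lam.parts.card, ∃! B, B ∈ π ∧ x ∈ B) ∧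
    π.val.map (fun B => B.sum fun i => lam.parts.toList.getD (i - 1) 0) = nu.parts }

/-!
A pairing `f₃` and `f₁` generate a group whose orbits on `{1,…,2n}` each split into two cycles
of `f₃ ∘ f₁` of equal length, exchanged by `f₁`; so `f₃ ∘ f₁` has cycle type `λλ` exactly when
the half-sizes of these orbits form `λ`. A set partition whose blocks are stable under `f₁` and
`f₃` is the same as a coarsening of the orbit partition, and numbering the orbits `1,…,ℓ(λ)`
identifies the coarsenings of half-type `ν` with the set partitions counted by `R̄_{λ,ν}`. The
same holds for `f₂` and `μ`; summing over `f₃`, grouped by `(λ, μ)`, gives the formula.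
-/

namespace Hypermap

open Finset

section Coarsening

variable {ι α : Type*}

def IsPartitionOf (X : Finset α) (π : Finset (Finset α)) : Prop :=
  (∀ B ∈ π, B.Nonempty) ∧ (∀ B ∈ π, B ⊆ X) ∧ ∀ x ∈ X, ∃! B, B ∈ π ∧ x ∈ B

theorem IsPartitionOf.eq_of_mem {X : Finset α} {π : Finset (Finset α)} (hπ : IsPartitionOf X π)
    {x : α} {B B' : Finset α} (hB : B ∈ π) (hB' : B' ∈ π) (hxB : x ∈ B) (hxB' : x ∈ B') :
    B = B' :=
  (hπ.2.2 x (hπ.2.1 B hB hxB)).unique ⟨hB, hxB⟩ ⟨hB', hxB'⟩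

theorem IsPartitionOf.pairwiseDisjoint {X : Finset α} {π : Finset (Finset α)}
    (hπ : IsPartitionOf X π) : (π : Set (Finset α)).PairwiseDisjoint id :=
  fun _ hB _ hB' hne => disjoint_left.2 fun _ hx hx' => hne (hπ.eq_of_mem hB hB' hx hx')

variable [DecidableEq α]

theorem IsPartitionOf.biUnion_eq {X : Finset α} {π : Finset (Finset α)}
    (hπ : IsPartitionOf X π) : π.biUnion id = X := by
  refine Subset.antisymm (biUnion_subset.2 hπ.2.1) fun x hx => ?_
  obtain ⟨B, ⟨hB, hxB⟩, -⟩ := hπ.2.2 x hx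
  exact mem_biUnion.2 ⟨B, hB, hxB⟩

theorem IsPartitionOf.sum_card {X : Finset α} {π : Finset (Finset α)}
    (hπ : IsPartitionOf X π) : ∑ B ∈ π, B.card = X.card := by
  rw [← hπ.biUnion_eq, card_biUnion hπ.pairwiseDisjoint]
  rfl

def IsSaturated (I : Finset ι) (φ : ι → Finset α) (C : Finset α) : Prop :=
  ∀ i ∈ I, ¬Disjoint (φ i) C → φ i ⊆ C

variable {I : Finset ι} {φ : ι → Finset α}

theorem isSaturated_image_iff [DecidableEq ι] {C : Finset α} :
    IsSaturated (I.image φ) id C ↔ IsSaturated I φ C := by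
  simp [IsSaturated]

theorem biUnion_filter_subset_eq {C : Finset α} (hC : C ⊆ I.biUnion φ)
    (hsat : IsSaturated I φ C) : (I.filter (fun i => φ i ⊆ C)).biUnion φ = C := by
  refine Subset.antisymm (biUnion_subset.2 fun i hi => (mem_filter.1 hi).2) fun x hx => ?_
  obtain ⟨i, hi, hxi⟩ := mem_biUnion.1 (hC hx)
  exact mem_biUnion.2 ⟨i, mem_filter.2 ⟨hi, hsat i hi (not_disjoint_iff.2 ⟨x, hxi, hx⟩)⟩, hxi⟩

variable [DecidableEq ι]

theorem filter_subset_biUnion_eq (hdisj : (I : Set ι).PairwiseDisjoint φ)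
    (hne : ∀ i ∈ I, (φ i).Nonempty) {b : Finset ι} (hb : b ⊆ I) :
    I.filter (fun i => φ i ⊆ b.biUnion φ) = b := by
  ext i
  simp only [mem_filter]
  refine ⟨fun ⟨hi, hsub⟩ => ?_, fun hib => ⟨hb hib, subset_biUnion_of_mem φ hib⟩⟩
  obtain ⟨x, hx⟩ := hne i hi
  obtain ⟨j, hj, hxj⟩ := mem_biUnion.1 (hsub hx)
  by_contra hib
  exact disjoint_left.1 (hdisj hi (hb hj) (ne_of_mem_of_not_mem hj hib).symm) hx hxj

theorem isPartitionOf_image_biUnion (hdisj : (I : Set ι).PairwiseDisjoint φ)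
    (hne : ∀ i ∈ I, (φ i).Nonempty) {π : Finset (Finset ι)} (hπ : IsPartitionOf I π) :
    IsPartitionOf (I.biUnion φ) (π.image (·.biUnion φ)) ∧
      ∀ C ∈ π.image (·.biUnion φ), IsSaturated I φ C := by
  have hmem : ∀ {b i x}, b ∈ π → x ∈ φ i → i ∈ I → x ∈ b.biUnion φ → i ∈ b := by
    intro b i x hb hxi hi hx
    obtain ⟨j, hj, hxj⟩ := mem_biUnion.1 hx
    by_contra hib
    exact disjoint_left.1 (hdisj hi (hπ.2.1 b hb hj) (ne_of_mem_of_not_mem hj hib).symm) hxi hxj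
  refine ⟨⟨?_, ?_, ?_⟩, ?_⟩
  · simp only [mem_image, forall_exists_index, and_imp]
    rintro _ b hb rfl
    obtain ⟨i, hi⟩ := hπ.1 b hb
    exact (hne i (hπ.2.1 b hb hi)).mono (subset_biUnion_of_mem φ hi)
  · simp only [mem_image, forall_exists_index, and_imp]
    rintro _ b hb rfl
    exact biUnion_subset_biUnion_of_subset_left φ (hπ.2.1 b hb)
  · intro x hx
    obtain ⟨i, hi, hxi⟩ := mem_biUnion.1 hx
    obtain ⟨b, ⟨hb, hib⟩, -⟩ := hπ.2.2 i hi
    refine ⟨b.biUnion φ, ⟨mem_image_of_mem _ hb, mem_biUnion.2 ⟨i, hib, hxi⟩⟩, ?_⟩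
    rintro _ ⟨hC, hxC⟩
    obtain ⟨b', hb', rfl⟩ := mem_image.1 hC
    rw [hπ.eq_of_mem hb' hb (hmem hb' hxi hi hxC) hib]
  · simp only [mem_image, forall_exists_index, and_imp]
    rintro _ b hb rfl i hi hmeet
    obtain ⟨x, hxi, hx⟩ := not_disjoint_iff.1 hmeet
    exact subset_biUnion_of_mem φ (hmem hb hxi hi hx)

theorem isPartitionOf_image_filter_subset (hne : ∀ i ∈ I, (φ i).Nonempty)
    {π : Finset (Finset α)} (hπ : IsPartitionOf (I.biUnion φ) π)
    (hsat : ∀ C ∈ π, IsSaturated I φ C) :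
    IsPartitionOf I (π.image fun C => I.filter (fun i => φ i ⊆ C)) := by
  have hmem : ∀ {C i x}, C ∈ π → i ∈ I → x ∈ φ i → x ∈ C → i ∈ I.filter (fun i => φ i ⊆ C) :=
    fun hC hi hxi hxC => mem_filter.2 ⟨hi, hsat _ hC _ hi (not_disjoint_iff.2 ⟨_, hxi, hxC⟩)⟩
  refine ⟨?_, ?_, ?_⟩
  · simp only [mem_image, forall_exists_index, and_imp]
    rintro _ C hC rfl
    obtain ⟨x, hx⟩ := hπ.1 C hC
    obtain ⟨i, hi, hxi⟩ := mem_biUnion.1 (hπ.2.1 C hC hx)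
    exact ⟨i, hmem hC hi hxi hx⟩
  · simp only [mem_image, forall_exists_index, and_imp]
    rintro _ C hC rfl
    exact filter_subset _ _
  · intro i hi
    obtain ⟨x, hxi⟩ := hne i hi
    obtain ⟨C, ⟨hC, hxC⟩, -⟩ := hπ.2.2 x (mem_biUnion.2 ⟨i, hi, hxi⟩)
    refine ⟨_, ⟨mem_image_of_mem _ hC, hmem hC hi hxi hxC⟩, ?_⟩
    rintro _ ⟨hb, hib⟩
    obtain ⟨C', hC', rfl⟩ := mem_image.1 hb
    rw [hπ.eq_of_mem hC' hC ((mem_filter.1 hib).2 hxi) hxC]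

/-- The bijection is `π ↦ {⋃ i ∈ b, φ i | b ∈ π}`, inverted blockwise by
`C ↦ {i ∈ I | φ i ⊆ C}`. -/
theorem ncard_saturated_partitions (hdisj : (I : Set ι).PairwiseDisjoint φ)
    (hne : ∀ i ∈ I, (φ i).Nonempty) {v : Finset α → ℕ} {w : ι → ℕ}
    (hvw : ∀ b ⊆ I, v (b.biUnion φ) = ∑ i ∈ b, w i) (ν : Multiset ℕ) :
    {π | IsPartitionOf (I.biUnion φ) π ∧ (∀ C ∈ π, IsSaturated I φ C) ∧ π.val.map v = ν}.ncard =
      {π | IsPartitionOf I π ∧ π.val.map (fun b => ∑ i ∈ b, w i) = ν}.ncard := by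
  set G : Finset α → Finset ι := fun C => I.filter (fun i => φ i ⊆ C)
  have hGF : ∀ π : Finset (Finset ι), IsPartitionOf I π → (π.image (·.biUnion φ)).image G = π := by
    intro π hπ
    rw [image_image]
    exact (image_congr fun b hb => filter_subset_biUnion_eq hdisj hne (hπ.2.1 b hb)).trans
      image_id
  have hFG : ∀ π, IsPartitionOf (I.biUnion φ) π → (∀ C ∈ π, IsSaturated I φ C) →
      (π.image G).image (·.biUnion φ) = π := by
    intro π hπ hsat
    rw [image_image]
    exact (image_congr fun C hC => biUnion_filter_subset_eq (hπ.2.1 C hC) (hsat C hC)).trans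
      image_id
  have hinj : Set.InjOn (fun π => π.image (·.biUnion φ))
      {π | IsPartitionOf I π ∧ π.val.map (fun b => ∑ i ∈ b, w i) = ν} :=
    fun π hπ π' hπ' he => by rw [← hGF π hπ.1, ← hGF π' hπ'.1]; exact congrArg (image G) he
  have hval : ∀ π : Finset (Finset ι), IsPartitionOf I π →
      (π.image (·.biUnion φ)).val.map v = π.val.map (fun b => ∑ i ∈ b, w i) := by
    intro π hπ
    rw [image_val_of_injOn, Multiset.map_map]
    · exact Multiset.map_congr rfl fun b hb => hvw b (hπ.2.1 b hb)
    · intro b hb b' hb' he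
      rw [← filter_subset_biUnion_eq hdisj hne (hπ.2.1 b hb),
        ← filter_subset_biUnion_eq hdisj hne (hπ.2.1 b' hb')]
      exact congrArg G he
  rw [← hinj.ncard_image]
  congr 1
  ext π
  constructor
  · rintro ⟨hπ, hsat, hv⟩
    have hGπ := isPartitionOf_image_filter_subset hne hπ hsat
    exact ⟨π.image G, ⟨hGπ, by rw [← hval _ hGπ, hFG π hπ hsat, hv]⟩, hFG π hπ hsat⟩
  · rintro ⟨π, ⟨hπ, hw⟩, rfl⟩
    obtain ⟨hpart, hsat⟩ := isPartitionOf_image_biUnion hdisj hne hπ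
    exact ⟨hpart, hsat, (hval π hπ).trans hw⟩

end Coarsening

theorem exists_injOn_image_eq_of_map_eq {α β γ : Type*} [DecidableEq α] [DecidableEq β]
    [Nonempty β] {s : Finset α} {t : Finset β} {wa : α → γ} {wb : β → γ}
    (h : s.val.map wa = t.val.map wb) :
    ∃ φ : α → β, Set.InjOn φ s ∧ s.image φ = t ∧ ∀ i ∈ s, wb (φ i) = wa i := by
  suffices ∃ φ : α → β, s.image φ = t ∧ ∀ i ∈ s, wb (φ i) = wa i by
    obtain ⟨φ, himg, hw⟩ := this
    refine ⟨φ, injOn_of_card_image_eq ?_, himg, hw⟩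
    rw [himg, ← card_val t, ← card_val s, ← Multiset.card_map wa,
      ← Multiset.card_map wb, h]
  induction s using Finset.induction_on generalizing t with
  | empty =>
    obtain rfl : t = ∅ := by simpa [eq_comm] using h
    exact ⟨fun _ => Classical.arbitrary β, by simp, by simp⟩
  | @insert a s ha ih =>
    rw [insert_val_of_notMem ha, Multiset.map_cons] at h
    obtain ⟨b, hb, hba⟩ := Multiset.mem_map.1 (h ▸ Multiset.mem_cons_self _ _)
    rw [← Multiset.cons_erase hb, Multiset.map_cons, hba, Multiset.cons_inj_right] at h
    obtain ⟨φ, himg, hw⟩ := ih (t := t.erase b) (by rwa [erase_val])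
    refine ⟨Function.update φ a b, ?_, ?_⟩
    · rw [image_insert, Function.update_self,
        image_congr fun i hi => Function.update_of_ne (ne_of_mem_of_not_mem hi ha) _ _,
        himg, insert_erase hb]
    · intro i hi
      rcases mem_insert.1 hi with rfl | hi
      · rwa [Function.update_self]
      · rw [Function.update_of_ne (ne_of_mem_of_not_mem hi ha), hw i hi]

theorem map_getD_Icc (L : List ℕ) :
    (Icc 1 L.length).val.map (fun i => L.getD (i - 1) 0) = (L : Multiset ℕ) := by
  change Multiset.map _ (List.range' 1 L.length : Multiset ℕ) = (L : Multiset ℕ)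
  rw [Multiset.map_coe]
  congr 1
  apply List.ext_getElem
  · simp
  · intro i _ hi
    simp [List.getElem?_eq_getElem hi]

theorem ncard_setOf_fst_mem_snd_mem {α β : Type*} {S : Set α} (hS : S.Finite)
    {A : α → Set β} (hA : ∀ a ∈ S, (A a).Finite) :
    {m : α × β | m.1 ∈ S ∧ m.2 ∈ A m.1}.ncard = ∑ a ∈ hS.toFinset, (A a).ncard := by
  classical
  have hT : {m : α × β | m.1 ∈ S ∧ m.2 ∈ A m.1}.Finite :=
    (hS.prod (hS.biUnion hA)).subset fun m hm => ⟨hm.1, Set.mem_biUnion hm.1 hm.2⟩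
  rw [Set.ncard_eq_toFinset_card _ hT, card_eq_sum_card_fiberwise (f := Prod.fst)
    fun m hm => hS.mem_toFinset.2 (hT.mem_toFinset.1 hm).1]
  refine sum_congr rfl fun a ha => ?_
  have hfiber : (hT.toFinset.filter (·.1 = a) : Set (α × β)) = Prod.mk a '' A a := by
    ext ⟨a', b⟩
    simp only [coe_filter, Set.Finite.mem_toFinset, Set.mem_ofPred_eq, Set.mem_image,
      Prod.mk.injEq]
    constructor
    · rintro ⟨⟨-, hb⟩, rfl⟩
      exact ⟨b, hb, rfl, rfl⟩
    · rintro ⟨b, hb, rfl, rfl⟩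
      exact ⟨⟨hS.mem_toFinset.1 ha, hb⟩, rfl⟩
  rw [← Set.ncard_coe_finset, hfiber, Set.ncard_image_of_injective _ (Prod.mk_right_injective a)]

section Orbits

variable {X : Finset ℕ} {h : ℕ → ℕ}

theorem exists_pos_iterate_eq_self (hmaps : Set.MapsTo h X X) (hinj : Set.InjOn h X) {x : ℕ}
    (hx : x ∈ X) : ∃ d, 0 < d ∧ h^[d] x = x := by
  obtain ⟨a, -, b, -, hne, he⟩ := exists_ne_map_eq_of_card_lt_of_maps_to
    (s := range (X.card + 1)) (by simp) fun m _ => hmaps.iterate m hx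
  wlog hab : a < b generalizing a b
  · exact this b a hne.symm he.symm (by omega)
  refine ⟨b - a, by omega, hinj.iterate hmaps a (hmaps.iterate _ hx) hx ?_⟩
  rw [← Function.iterate_add_apply, Nat.add_sub_cancel' hab.le, he]

theorem fwdOrbit_subset (hmaps : Set.MapsTo h X X) {x : ℕ} (hx : x ∈ X) :
    fwdOrbit h x ⊆ X := by
  rintro _ ⟨m, rfl⟩
  exact hmaps.iterate m hx

theorem fwdOrbit_subset_of_mem {x y : ℕ} (hy : y ∈ fwdOrbit h x) :
    fwdOrbit h y ⊆ fwdOrbit h x := by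
  obtain ⟨m, rfl⟩ := hy
  rintro _ ⟨k, rfl⟩
  exact ⟨k + m, Function.iterate_add_apply h k m x⟩

theorem mem_fwdOrbit_symm (hmaps : Set.MapsTo h X X) (hinj : Set.InjOn h X) {x y : ℕ}
    (hx : x ∈ X) (hy : y ∈ fwdOrbit h x) : x ∈ fwdOrbit h y := by
  obtain ⟨m, rfl⟩ := hy
  obtain ⟨d, hd, hdx⟩ := exists_pos_iterate_eq_self hmaps hinj hx
  refine ⟨d * m - m, ?_⟩
  rw [← Function.iterate_add_apply, Nat.sub_add_cancel (Nat.le_mul_of_pos_left m hd),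
    Function.iterate_mul, Function.iterate_fixed hdx]

theorem fwdOrbit_eq_of_mem (hmaps : Set.MapsTo h X X) (hinj : Set.InjOn h X) {x y : ℕ}
    (hx : x ∈ X) (hy : y ∈ fwdOrbit h x) : fwdOrbit h y = fwdOrbit h x :=
  (fwdOrbit_subset_of_mem hy).antisymm
    (fwdOrbit_subset_of_mem (mem_fwdOrbit_symm hmaps hinj hx hy))

end Orbits

section Pairings

variable {X : Finset ℕ} {f g : ℕ → ℕ}

def IsPairingOn (X : Finset ℕ) (f : ℕ → ℕ) : Prop :=
  ∀ x ∈ X, f x ∈ X ∧ f (f x) = x ∧ f x ≠ x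

theorem IsPairingOn.injOn (hf : IsPairingOn X f) : Set.InjOn f X := fun x hx y hy hxy => by
  rw [← (hf x hx).2.1, hxy, (hf y hy).2.1]

theorem IsPairingOn.mapsTo_comp (hf : IsPairingOn X f) (hg : IsPairingOn X g) :
    Set.MapsTo (g ∘ f) X X :=
  fun x hx => (hg _ (hf x hx).1).1

theorem IsPairingOn.comp_apply_comp (hf : IsPairingOn X f) (hg : IsPairingOn X g) {x : ℕ}
    (hx : x ∈ X) : (f ∘ g) ((g ∘ f) x) = x := by
  simp only [Function.comp_apply, (hg _ (hf x hx).1).2.1, (hf x hx).2.1]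

theorem IsPairingOn.injOn_comp (hf : IsPairingOn X f) (hg : IsPairingOn X g) :
    Set.InjOn (g ∘ f) X :=
  hg.injOn.comp hf.injOn fun x hx => (hf x hx).1

theorem comp_swap_mem_fwdOrbit (hf : IsPairingOn X f) (hg : IsPairingOn X g) {x : ℕ}
    (hx : x ∈ X) : (f ∘ g) x ∈ fwdOrbit (g ∘ f) x := by
  obtain ⟨d, hd, hdx⟩ := exists_pos_iterate_eq_self (hf.mapsTo_comp hg) (hf.injOn_comp hg) hx
  refine ⟨d - 1, ?_⟩
  conv_rhs => rw [← hdx, ← Nat.sub_add_cancel hd, Function.iterate_succ_apply']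
  rw [hf.comp_apply_comp hg ((hf.mapsTo_comp hg).iterate _ hx)]

theorem apply_mem_fwdOrbit_apply (hf : IsPairingOn X f) (hg : IsPairingOn X g) {x y : ℕ}
    (hx : x ∈ X) (hy : y ∈ fwdOrbit (g ∘ f) x) : f y ∈ fwdOrbit (g ∘ f) (f x) := by
  obtain ⟨m, rfl⟩ := hy
  induction m with
  | zero => exact ⟨0, rfl⟩
  | succ m ih =>
    have hz : f ((g ∘ f)^[m] x) ∈ X := (hf _ ((hf.mapsTo_comp hg).iterate m hx)).1
    have hstep : f ((g ∘ f)^[m + 1] x) = (f ∘ g) (f ((g ∘ f)^[m] x)) := by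
      rw [Function.iterate_succ_apply']; rfl
    rw [hstep]
    exact fwdOrbit_subset_of_mem ih (comp_swap_mem_fwdOrbit hf hg hz)

/-- On the orbit of `x`, `f` acts as the reflection `(g ∘ f)^[j] x ↦ (g ∘ f)^[m - j] x` when
`f x = (g ∘ f)^[m] x`; its middle point would be a fixed point of `f` or of `g`. -/
theorem apply_notMem_fwdOrbit (hf : IsPairingOn X f) (hg : IsPairingOn X g) {x : ℕ}
    (hx : x ∈ X) : f x ∉ fwdOrbit (g ∘ f) x := by
  rintro ⟨m, hm⟩
  have hmaps := hf.mapsTo_comp hg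
  have hrefl : ∀ j ≤ m, f ((g ∘ f)^[j] x) = (g ∘ f)^[m - j] x := by
    intro j
    induction j with
    | zero => intro _; simpa using hm.symm
    | succ j ih =>
      intro hj
      rw [Function.iterate_succ_apply', Function.comp_apply, ih (by omega),
        show m - j = m - (j + 1) + 1 by omega, Function.iterate_succ_apply']
      exact hf.comp_apply_comp hg (hmaps.iterate _ hx)
  obtain ⟨j, rfl | rfl⟩ := Nat.even_or_odd' m
  · exact (hf _ (hmaps.iterate j hx)).2.2 (by rw [hrefl j (by omega)]; congr 1; omega)
  · have hu := (hf _ (hmaps.iterate j hx)).1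
    have hj := hrefl (j + 1) (by omega)
    rw [show 2 * j + 1 - (j + 1) = j by omega, Function.iterate_succ_apply',
      Function.comp_apply] at hj
    refine (hg _ hu).2.2 ?_
    conv_rhs => rw [← hj]
    rw [(hf _ (hg _ hu).1).2.1]

end Pairings

section Cycles

variable {X : Finset ℕ} {h : ℕ → ℕ} {x y : ℕ}

open Classical in
noncomputable def cycleOn (X : Finset ℕ) (h : ℕ → ℕ) (x : ℕ) : Finset ℕ :=
  X.filter (· ∈ fwdOrbit h x)

theorem coe_cycleOn (hmaps : Set.MapsTo h X X) (hx : x ∈ X) :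
    (cycleOn X h x : Set ℕ) = fwdOrbit h x := by
  classical
  ext y
  simpa [cycleOn] using fun hy => fwdOrbit_subset hmaps hx hy

theorem mem_cycleOn (hmaps : Set.MapsTo h X X) (hx : x ∈ X) :
    y ∈ cycleOn X h x ↔ y ∈ fwdOrbit h x := by
  rw [← mem_coe, coe_cycleOn hmaps hx]

theorem cycleOn_subset : cycleOn X h x ⊆ X := by
  classical
  exact filter_subset _ _

theorem self_mem_cycleOn (hmaps : Set.MapsTo h X X) (hx : x ∈ X) : x ∈ cycleOn X h x :=
  (mem_cycleOn hmaps hx).2 ⟨0, rfl⟩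

theorem apply_mem_cycleOn (hmaps : Set.MapsTo h X X) (hx : x ∈ X) (hy : y ∈ cycleOn X h x) :
    h y ∈ cycleOn X h x := by
  obtain ⟨m, rfl⟩ := (mem_cycleOn hmaps hx).1 hy
  exact (mem_cycleOn hmaps hx).2 ⟨m + 1, Function.iterate_succ_apply' h m x⟩

theorem cycleOn_eq_of_mem (hmaps : Set.MapsTo h X X) (hinj : Set.InjOn h X) (hx : x ∈ X)
    (hy : y ∈ cycleOn X h x) : cycleOn X h y = cycleOn X h x := by
  apply coe_injective
  rw [coe_cycleOn hmaps (cycleOn_subset hy), coe_cycleOn hmaps hx,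
    fwdOrbit_eq_of_mem hmaps hinj hx ((mem_cycleOn hmaps hx).1 hy)]

end Cycles

section GroupOrbits

variable {X : Finset ℕ} {f g : ℕ → ℕ} {x y : ℕ}

theorem apply_mem_cycleOn_apply (hf : IsPairingOn X f) (hg : IsPairingOn X g) (hx : x ∈ X)
    (hy : y ∈ cycleOn X (g ∘ f) x) : f y ∈ cycleOn X (g ∘ f) (f x) := by
  have hmaps := hf.mapsTo_comp hg
  exact (mem_cycleOn hmaps (hf x hx).1).2
    (apply_mem_fwdOrbit_apply hf hg hx ((mem_cycleOn hmaps hx).1 hy))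

theorem card_cycleOn_apply (hf : IsPairingOn X f) (hg : IsPairingOn X g) (hx : x ∈ X) :
    (cycleOn X (g ∘ f) (f x)).card = (cycleOn X (g ∘ f) x).card := by
  have hle : ∀ z ∈ X, (cycleOn X (g ∘ f) z).card ≤ (cycleOn X (g ∘ f) (f z)).card :=
    fun z hz => card_le_card_of_injOn f (fun y hy => apply_mem_cycleOn_apply hf hg hz hy)
      (hf.injOn.mono (coe_subset.2 cycleOn_subset))
  refine (hle x hx).antisymm' ?_
  simpa only [(hf x hx).2.1] using hle (f x) (hf x hx).1

theorem disjoint_cycleOn_apply (hf : IsPairingOn X f) (hg : IsPairingOn X g) (hx : x ∈ X) :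
    Disjoint (cycleOn X (g ∘ f) x) (cycleOn X (g ∘ f) (f x)) := by
  have hmaps := hf.mapsTo_comp hg
  have hinj := hf.injOn_comp hg
  refine disjoint_left.2 fun y hy hy' => apply_notMem_fwdOrbit hf hg hx ?_
  rw [← mem_cycleOn hmaps hx, ← cycleOn_eq_of_mem hmaps hinj hx hy,
    cycleOn_eq_of_mem hmaps hinj (hf x hx).1 hy']
  exact self_mem_cycleOn hmaps (hf x hx).1

/-- The orbit of `x` under the group generated by `f` and `g`. -/
noncomputable def groupOrbit (X : Finset ℕ) (f g : ℕ → ℕ) (x : ℕ) : Finset ℕ :=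
  cycleOn X (g ∘ f) x ∪ cycleOn X (g ∘ f) (f x)

theorem groupOrbit_subset : groupOrbit X f g x ⊆ X :=
  union_subset cycleOn_subset cycleOn_subset

theorem self_mem_groupOrbit (hf : IsPairingOn X f) (hg : IsPairingOn X g) (hx : x ∈ X) :
    x ∈ groupOrbit X f g x :=
  mem_union_left _ (self_mem_cycleOn (hf.mapsTo_comp hg) hx)

theorem card_groupOrbit (hf : IsPairingOn X f) (hg : IsPairingOn X g) (hx : x ∈ X) :
    (groupOrbit X f g x).card = 2 * (cycleOn X (g ∘ f) x).card := by
  rw [groupOrbit, card_union_of_disjoint (disjoint_cycleOn_apply hf hg hx),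
    card_cycleOn_apply hf hg hx, two_mul]

theorem apply_mem_cycleOn_of_mem_cycleOn_apply (hf : IsPairingOn X f) (hg : IsPairingOn X g)
    (hx : x ∈ X) (hy : y ∈ cycleOn X (g ∘ f) (f x)) : f y ∈ cycleOn X (g ∘ f) x := by
  simpa only [(hf x hx).2.1] using apply_mem_cycleOn_apply hf hg (hf x hx).1 hy

theorem stableUnder_groupOrbit_left (hf : IsPairingOn X f) (hg : IsPairingOn X g) (hx : x ∈ X) :
    StableUnder f (groupOrbit X f g x) := by
  intro y hy
  rcases mem_union.1 hy with hy | hy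
  · exact mem_union_right _ (apply_mem_cycleOn_apply hf hg hx hy)
  · exact mem_union_left _ (apply_mem_cycleOn_of_mem_cycleOn_apply hf hg hx hy)

theorem stableUnder_groupOrbit_right (hf : IsPairingOn X f) (hg : IsPairingOn X g) (hx : x ∈ X) :
    StableUnder g (groupOrbit X f g x) := by
  intro y hy
  have hmaps := hf.mapsTo_comp hg
  have hgy : g y = (g ∘ f) (f y) := by
    rw [Function.comp_apply, (hf y (groupOrbit_subset hy)).2.1]
  rw [hgy]
  rcases mem_union.1 hy with hy | hy
  · exact mem_union_right _
      (apply_mem_cycleOn hmaps (hf x hx).1 (apply_mem_cycleOn_apply hf hg hx hy))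
  · exact mem_union_left _
      (apply_mem_cycleOn hmaps hx (apply_mem_cycleOn_of_mem_cycleOn_apply hf hg hx hy))

theorem groupOrbit_eq_of_mem (hf : IsPairingOn X f) (hg : IsPairingOn X g) (hx : x ∈ X)
    (hy : y ∈ groupOrbit X f g x) : groupOrbit X f g y = groupOrbit X f g x := by
  have hmaps := hf.mapsTo_comp hg
  have hinj := hf.injOn_comp hg
  rcases mem_union.1 hy with hy | hy
  · rw [groupOrbit, groupOrbit, cycleOn_eq_of_mem hmaps hinj hx hy,
      cycleOn_eq_of_mem hmaps hinj (hf x hx).1 (apply_mem_cycleOn_apply hf hg hx hy)]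
  · rw [groupOrbit, groupOrbit, cycleOn_eq_of_mem hmaps hinj (hf x hx).1 hy,
      cycleOn_eq_of_mem hmaps hinj hx (apply_mem_cycleOn_of_mem_cycleOn_apply hf hg hx hy),
      union_comm]

theorem groupOrbit_subset_of_stableUnder (hf : IsPairingOn X f) (hg : IsPairingOn X g) (hx : x ∈ X)
    {B : Finset ℕ} (hBf : StableUnder f B) (hBg : StableUnder g B) (hxB : x ∈ B) :
    groupOrbit X f g x ⊆ B := by
  have hmaps := hf.mapsTo_comp hg
  have hiter : ∀ z ∈ B, ∀ m, (g ∘ f)^[m] z ∈ B := by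
    intro z hz m
    induction m with
    | zero => exact hz
    | succ m ih => rw [Function.iterate_succ_apply']; exact hBg _ (hBf _ ih)
  intro y hy
  rcases mem_union.1 hy with hy | hy
  · obtain ⟨m, rfl⟩ := (mem_cycleOn hmaps hx).1 hy
    exact hiter x hxB m
  · obtain ⟨m, rfl⟩ := (mem_cycleOn hmaps (hf x hx).1).1 hy
    exact hiter _ (hBf x hxB) m

end GroupOrbits

section CycleType

variable {X : Finset ℕ} {f g : ℕ → ℕ}

noncomputable def groupOrbits (X : Finset ℕ) (f g : ℕ → ℕ) : Finset (Finset ℕ) :=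
  X.image (groupOrbit X f g)

theorem isPartitionOf_groupOrbits (hf : IsPairingOn X f) (hg : IsPairingOn X g) :
    IsPartitionOf X (groupOrbits X f g) := by
  refine ⟨?_, ?_, fun x hx => ⟨groupOrbit X f g x,
    ⟨mem_image_of_mem _ hx, self_mem_groupOrbit hf hg hx⟩, ?_⟩⟩
  · simp only [groupOrbits, mem_image, forall_exists_index, and_imp]
    rintro _ x hx rfl
    exact ⟨x, self_mem_groupOrbit hf hg hx⟩
  · simp only [groupOrbits, mem_image, forall_exists_index, and_imp]
    rintro _ x - rfl
    exact groupOrbit_subset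
  · rintro _ ⟨hB, hxB⟩
    obtain ⟨y, hy, rfl⟩ := mem_image.1 hB
    exact (groupOrbit_eq_of_mem hf hg hy hxB).symm

theorem card_of_mem_groupOrbits (hf : IsPairingOn X f) (hg : IsPairingOn X g) {B : Finset ℕ}
    (hB : B ∈ groupOrbits X f g) : ∃ x ∈ X, B = groupOrbit X f g x ∧
      B.card = 2 * (cycleOn X (g ∘ f) x).card ∧ 0 < (cycleOn X (g ∘ f) x).card := by
  obtain ⟨x, hx, rfl⟩ := mem_image.1 hB
  exact ⟨x, hx, rfl, card_groupOrbit hf hg hx,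
    card_pos.2 ⟨x, self_mem_cycleOn (hf.mapsTo_comp hg) hx⟩⟩

theorem stableUnder_iff_isSaturated (hf : IsPairingOn X f) (hg : IsPairingOn X g)
    {C : Finset ℕ} (hC : C ⊆ X) :
    StableUnder f C ∧ StableUnder g C ↔ IsSaturated (groupOrbits X f g) id C := by
  constructor
  · rintro ⟨hCf, hCg⟩ B hB hmeet
    obtain ⟨y, hyB, hyC⟩ := not_disjoint_iff.1 hmeet
    obtain ⟨x, hx, rfl⟩ := mem_image.1 hB
    rw [id, ← groupOrbit_eq_of_mem hf hg hx hyB]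
    exact groupOrbit_subset_of_stableUnder hf hg (groupOrbit_subset hyB) hCf hCg hyC
  · intro hsat
    have hsub : ∀ x ∈ C, groupOrbit X f g x ⊆ C := fun x hxC =>
      hsat _ (mem_image_of_mem _ (hC hxC))
        (not_disjoint_iff.2 ⟨x, self_mem_groupOrbit hf hg (hC hxC), hxC⟩)
    exact ⟨fun x hxC => hsub x hxC (stableUnder_groupOrbit_left hf hg (hC hxC) x
        (self_mem_groupOrbit hf hg (hC hxC))),
      fun x hxC => hsub x hxC (stableUnder_groupOrbit_right hf hg (hC hxC) x
        (self_mem_groupOrbit hf hg (hC hxC)))⟩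

theorem sum_halfType_groupOrbits (hf : IsPairingOn X f) (hg : IsPairingOn X g) :
    2 * (halfType (groupOrbits X f g)).sum = X.card := by
  rw [← (isPartitionOf_groupOrbits hf hg).sum_card, halfType, ← Finset.sum_eq_multiset_sum,
    mul_sum]
  refine sum_congr rfl fun B hB => ?_
  obtain ⟨x, -, -, hcard, -⟩ := card_of_mem_groupOrbits hf hg hB
  omega

theorem pos_of_mem_halfType_groupOrbits (hf : IsPairingOn X f) (hg : IsPairingOn X g) {k : ℕ}
    (hk : k ∈ halfType (groupOrbits X f g)) : 0 < k := by
  obtain ⟨B, hB, rfl⟩ := Multiset.mem_map.1 hk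
  obtain ⟨x, -, -, hcard, hpos⟩ := card_of_mem_groupOrbits hf hg hB
  omega

theorem count_halfType_groupOrbits (hf : IsPairingOn X f) (hg : IsPairingOn X g) (k : ℕ) :
    (halfType (groupOrbits X f g)).count k =
      ((groupOrbits X f g).filter (·.card = 2 * k)).card := by
  rw [halfType, Multiset.count_map, card_def, filter_val]
  congr 1
  refine Multiset.filter_congr fun B hB => ?_
  obtain ⟨x, -, -, hcard, -⟩ := card_of_mem_groupOrbits hf hg hB
  omega

noncomputable def cycles (X : Finset ℕ) (h : ℕ → ℕ) : Finset (Finset ℕ) :=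
  X.image (cycleOn X h)

theorem cycles_filter_subset_groupOrbit (hf : IsPairingOn X f) (hg : IsPairingOn X g) {x : ℕ}
    (hx : x ∈ X) : (cycles X (g ∘ f)).filter (· ⊆ groupOrbit X f g x) =
      {cycleOn X (g ∘ f) x, cycleOn X (g ∘ f) (f x)} := by
  have hmaps := hf.mapsTo_comp hg
  have hinj := hf.injOn_comp hg
  ext O
  simp only [cycles, mem_filter, mem_image, mem_insert, mem_singleton]
  constructor
  · rintro ⟨⟨y, hy, rfl⟩, hsub⟩
    rcases mem_union.1 (hsub (self_mem_cycleOn hmaps hy)) with hy' | hy'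
    · exact Or.inl (cycleOn_eq_of_mem hmaps hinj hx hy')
    · exact Or.inr (cycleOn_eq_of_mem hmaps hinj (hf x hx).1 hy')
  · rintro (rfl | rfl)
    · exact ⟨⟨x, hx, rfl⟩, subset_union_left⟩
    · exact ⟨⟨f x, (hf x hx).1, rfl⟩, subset_union_right⟩

theorem filter_card_cycles_eq_biUnion (hf : IsPairingOn X f) (hg : IsPairingOn X g) (k : ℕ) :
    (cycles X (g ∘ f)).filter (·.card = k) =
      ((groupOrbits X f g).filter (·.card = 2 * k)).biUnion
        fun B => (cycles X (g ∘ f)).filter (· ⊆ B) := by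
  ext O
  simp only [mem_filter, mem_biUnion]
  constructor
  · rintro ⟨hO, hk⟩
    obtain ⟨y, hy, rfl⟩ := mem_image.1 hO
    exact ⟨groupOrbit X f g y, ⟨mem_image_of_mem _ hy, by rw [card_groupOrbit hf hg hy, hk]⟩,
      hO, subset_union_left⟩
  · rintro ⟨B, ⟨hB, hk⟩, hO, hsub⟩
    obtain ⟨x, hx, rfl, hcard, -⟩ := card_of_mem_groupOrbits hf hg hB
    have hO' := cycles_filter_subset_groupOrbit hf hg hx ▸ mem_filter.2 ⟨hO, hsub⟩
    refine ⟨hO, ?_⟩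
    rcases mem_insert.1 hO' with hO' | hO'
    · rw [hO']; omega
    · rw [mem_singleton.1 hO', card_cycleOn_apply hf hg hx]; omega

theorem card_cycles_filter_card (hf : IsPairingOn X f) (hg : IsPairingOn X g) (k : ℕ) :
    ((cycles X (g ∘ f)).filter (·.card = k)).card =
      2 * ((groupOrbits X f g).filter (·.card = 2 * k)).card := by
  have hmaps := hf.mapsTo_comp hg
  rw [filter_card_cycles_eq_biUnion hf hg, card_biUnion, sum_congr rfl, sum_const, smul_eq_mul,
    mul_comm]
  · intro B hB
    obtain ⟨x, hx, rfl, -, -⟩ := card_of_mem_groupOrbits hf hg (mem_filter.1 hB).1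
    rw [cycles_filter_subset_groupOrbit hf hg hx, card_pair]
    intro he
    have hmem := self_mem_cycleOn hmaps hx
    exact disjoint_left.1 (disjoint_cycleOn_apply hf hg hx) hmem (he ▸ hmem)
  · intro B hB B' hB' hne
    refine disjoint_left.2 fun O hO hO' => ?_
    obtain ⟨hOc, hOB⟩ := mem_filter.1 hO
    obtain ⟨y, hy, rfl⟩ := mem_image.1 hOc
    have hBB' : Disjoint B B' := (isPartitionOf_groupOrbits hf hg).pairwiseDisjoint
      (mem_filter.1 hB).1 (mem_filter.1 hB').1 hne
    exact disjoint_left.1 hBB' (hOB (self_mem_cycleOn hmaps hy))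
      ((mem_filter.1 hO').2 (self_mem_cycleOn hmaps hy))

theorem hasCycleTypeOn_iff {n : ℕ} {h : ℕ → ℕ} (hmaps : Set.MapsTo h (groundSet n) (groundSet n))
    (M : Multiset ℕ) : HasCycleTypeOn n h M ↔
      ∀ k, ((cycles (groundSet n) h).filter (·.card = k)).card = M.count k := by
  have hsets : ∀ k, {S : Set ℕ | (∃ x ∈ groundSet n, S = fwdOrbit h x) ∧ S.ncard = k} =
      (fun B : Finset ℕ => (B : Set ℕ)) '' ((cycles (groundSet n) h).filter (·.card = k)) := by
    intro k
    ext S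
    simp only [Set.mem_ofPred_eq, Set.mem_image, mem_coe, mem_filter, cycles, mem_image]
    constructor
    · rintro ⟨⟨x, hx, rfl⟩, rfl⟩
      exact ⟨cycleOn _ h x, ⟨⟨x, hx, rfl⟩, by rw [← Set.ncard_coe_finset, coe_cycleOn hmaps hx]⟩,
        coe_cycleOn hmaps hx⟩
    · rintro ⟨_, ⟨⟨x, hx, rfl⟩, rfl⟩, rfl⟩
      exact ⟨⟨x, hx, coe_cycleOn hmaps hx⟩, Set.ncard_coe_finset _⟩
  simp only [HasCycleTypeOn, hsets, Set.ncard_image_of_injective _ coe_injective,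
    Set.ncard_coe_finset]

theorem hasCycleTypeOn_add_self_iff {n : ℕ} (hf : IsPairingOn (groundSet n) f)
    (hg : IsPairingOn (groundSet n) g) (μ : Multiset ℕ) :
    HasCycleTypeOn n (g ∘ f) (μ + μ) ↔ μ = halfType (groupOrbits (groundSet n) f g) := by
  simp only [hasCycleTypeOn_iff (hf.mapsTo_comp hg), card_cycles_filter_card hf hg,
    ← count_halfType_groupOrbits hf hg, Multiset.count_add, Multiset.ext]
  constructor <;> intro H k <;> have := H k <;> omega

end CycleType

theorem isPairingOn_f1 (n : ℕ) : IsPairingOn (groundSet n) (f1 n) := by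
  intro x hx
  simp only [groundSet, mem_Icc] at hx ⊢
  unfold f1
  split_ifs <;> omega

theorem isPairingOn_f2 (n : ℕ) : IsPairingOn (groundSet n) f2 := by
  intro x hx
  simp only [groundSet, mem_Icc] at hx ⊢
  unfold f2
  split_ifs <;> omega

section Counting

variable {X : Finset ℕ} {f g : ℕ → ℕ}

def stablePartitions (X : Finset ℕ) (f g : ℕ → ℕ) (ν : Multiset ℕ) : Set (Finset (Finset ℕ)) :=
  {π | IsPartitionOf X π ∧ (∀ B ∈ π, StableUnder f B ∧ StableUnder g B) ∧ halfType π = ν}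

theorem stablePartitions_finite (X : Finset ℕ) (f g : ℕ → ℕ) (ν : Multiset ℕ) :
    (stablePartitions X f g ν).Finite :=
  (X.powerset.powerset : Set (Finset (Finset ℕ))).toFinite.subset fun _ hπ =>
    mem_coe.2 (mem_powerset.2 fun B hB => mem_powerset.2 (hπ.1.2.1 B hB))

theorem ncard_stablePartitions (hf : IsPairingOn X f) (hg : IsPairingOn X g) {L : List ℕ}
    (hL : (L : Multiset ℕ) = halfType (groupOrbits X f g)) (ν : Multiset ℕ) :
    (stablePartitions X f g ν).ncard = {π | IsPartitionOf (Icc 1 L.length) π ∧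
      π.val.map (fun b => b.sum fun i => L.getD (i - 1) 0) = ν}.ncard := by
  have hpart := isPartitionOf_groupOrbits hf hg
  obtain ⟨φ, hφinj, hφimg, hφw⟩ := exists_injOn_image_eq_of_map_eq
    (s := Icc 1 L.length) (wa := fun i => L.getD (i - 1) 0) (wb := fun B : Finset ℕ => B.card / 2)
    (by rw [map_getD_Icc, hL]; rfl)
  have hφmem : ∀ i ∈ Icc 1 L.length, φ i ∈ groupOrbits X f g :=
    fun i hi => hφimg ▸ mem_image_of_mem φ hi
  have hdisj : (Icc 1 L.length : Set ℕ).PairwiseDisjoint φ :=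
    fun i hi j hj hij => hpart.pairwiseDisjoint (hφmem i hi) (hφmem j hj) (hφinj.ne hi hj hij)
  have hne : ∀ i ∈ Icc 1 L.length, (φ i).Nonempty := fun i hi => hpart.1 _ (hφmem i hi)
  have hX : (Icc 1 L.length).biUnion φ = X := by
    rw [← hpart.biUnion_eq, ← hφimg, image_biUnion]
    rfl
  have hvw : ∀ b ⊆ Icc 1 L.length,
      (b.biUnion φ).card / 2 = ∑ i ∈ b, L.getD (i - 1) 0 := by
    intro b hb
    have hcard : ∀ i ∈ b, (φ i).card = 2 * L.getD (i - 1) 0 := fun i hi => by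
      obtain ⟨x, -, -, hc, -⟩ := card_of_mem_groupOrbits hf hg (hφmem i (hb hi))
      have := hφw i (hb hi)
      omega
    rw [card_biUnion (hdisj.subset hb), sum_congr rfl hcard, ← mul_sum]
    omega
  rw [← ncard_saturated_partitions hdisj hne (v := fun B => B.card / 2) hvw ν, hX]
  congr 1
  ext π
  refine and_congr_right fun hπ => and_congr_left' (forall₂_congr fun C hC => ?_)
  rw [stableUnder_iff_isSaturated hf hg (hπ.2.1 C hC), ← hφimg, isSaturated_image_iff]

theorem Rbar_eq_ncard {n : ℕ} (lam ν : Nat.Partition n) :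
    Rbar lam ν = {π | IsPartitionOf (Icc 1 lam.parts.toList.length) π ∧
      π.val.map (fun b => b.sum fun i => lam.parts.toList.getD (i - 1) 0) = ν.parts}.ncard := by
  simp only [Rbar, IsPartitionOf, Multiset.length_toList, and_assoc]

theorem ncard_stablePartitions_eq_Rbar {n : ℕ} (hf : IsPairingOn (groundSet n) f)
    (hg : IsPairingOn (groundSet n) g) {lam : Nat.Partition n}
    (hlam : lam.parts = halfType (groupOrbits (groundSet n) f g)) (ν : Nat.Partition n) :
    (stablePartitions (groundSet n) f g ν.parts).ncard = Rbar lam ν := by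
  rw [Rbar_eq_ncard, ncard_stablePartitions hf hg (L := lam.parts.toList)
    (by rw [Multiset.coe_toList, hlam])]

end Counting

theorem setOf_isPairing_finite (n : ℕ) : {f | IsPairing n f}.Finite := by
  refine Set.Finite.of_finite_image (f := fun f (x : groundSet n) => f x) ?_ ?_
  · refine (Set.Finite.pi (t := fun _ => (groundSet n : Set ℕ))
      fun _ => (groundSet n).finite_toSet).subset ?_
    rintro _ ⟨f, hf, rfl⟩ x -
    exact (hf.1 x x.2).1
  · intro f hf f' hf' he
    funext x
    by_cases hx : x ∈ groundSet n
    · exact congrFun he ⟨x, hx⟩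
    · rw [hf.2 x hx, hf'.2 x hx]

noncomputable def pairings (n : ℕ) : Finset (ℕ → ℕ) :=
  (setOf_isPairing_finite n).toFinset

theorem mem_pairings {n : ℕ} {f : ℕ → ℕ} : f ∈ pairings n ↔ IsPairing n f :=
  Set.Finite.mem_toFinset _

open Classical in
/-- The partition `λ` of `n` for which `g ∘ f` has cycle type `λλ` on `{1,…,2n}`; it is the
junk value `default` unless `f` and `g` are pairings there. -/
noncomputable def halfCycleType (n : ℕ) (f g : ℕ → ℕ) : Nat.Partition n :=
  if h : IsPairingOn (groundSet n) f ∧ IsPairingOn (groundSet n) g then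
    { parts := halfType (groupOrbits (groundSet n) f g)
      parts_pos := pos_of_mem_halfType_groupOrbits h.1 h.2
      parts_sum := by
        have := sum_halfType_groupOrbits h.1 h.2
        rw [show (groundSet n).card = 2 * n by simp [groundSet]] at this
        omega }
  else default

theorem halfCycleType_parts {n : ℕ} {f g : ℕ → ℕ} (hf : IsPairingOn (groundSet n) f)
    (hg : IsPairingOn (groundSet n) g) :
    (halfCycleType n f g).parts = halfType (groupOrbits (groundSet n) f g) := by
  rw [halfCycleType, dif_pos ⟨hf, hg⟩]

theorem hasCycleTypeOn_add_self_iff_halfCycleType {n : ℕ} {f g : ℕ → ℕ}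
    (hf : IsPairingOn (groundSet n) f) (hg : IsPairingOn (groundSet n) g) (lam : Nat.Partition n) :
    HasCycleTypeOn n (g ∘ f) (lam.parts + lam.parts) ↔ halfCycleType n f g = lam := by
  rw [hasCycleTypeOn_add_self_iff hf hg, Nat.Partition.ext_iff, halfCycleType_parts hf hg,
    eq_comm]

theorem LPtype_eq_sum_ncard_mul (n : ℕ) (ν ρ : Multiset ℕ) :
    LPtype n ν ρ = ∑ f3 ∈ pairings n,
      (stablePartitions (groundSet n) (f1 n) f3 ν).ncard *
        (stablePartitions (groundSet n) f2 f3 ρ).ncard := by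
  have hset : {m : (ℕ → ℕ) × Finset (Finset ℕ) × Finset (Finset ℕ) |
      IsLOPH n m.1 m.2.1 m.2.2 ∧ halfType m.2.1 = ν ∧ halfType m.2.2 = ρ} =
      {m | m.1 ∈ {f | IsPairing n f} ∧ m.2 ∈ stablePartitions (groundSet n) (f1 n) m.1 ν ×ˢ
        stablePartitions (groundSet n) f2 m.1 ρ} := by
    ext ⟨f3, π1, π2⟩
    simp only [IsLOPH, stablePartitions, IsSetPartition, IsPartitionOf, Set.mem_ofPred_eq,
      Set.mem_prod]
    tauto
  rw [LPtype, hset, ncard_setOf_fst_mem_snd_mem (setOf_isPairing_finite n)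
    (A := fun f3 => stablePartitions (groundSet n) (f1 n) f3 ν ×ˢ
      stablePartitions (groundSet n) f2 f3 ρ)
    fun f3 _ => (stablePartitions_finite _ _ _ _).prod (stablePartitions_finite _ _ _ _)]
  simp_rw [Set.ncard_prod]
  rfl

theorem LPtype_eq_sum_Rbar_mul (n : ℕ) (ν ρ : Nat.Partition n) :
    LPtype n ν.parts ρ.parts = ∑ f3 ∈ pairings n,
      Rbar (halfCycleType n (f1 n) f3) ν * Rbar (halfCycleType n f2 f3) ρ := by
  rw [LPtype_eq_sum_ncard_mul]
  refine sum_congr rfl fun f3 hf3 => ?_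
  have hf3 : IsPairingOn (groundSet n) f3 := (mem_pairings.1 hf3).1
  rw [ncard_stablePartitions_eq_Rbar (isPairingOn_f1 n) hf3
      (halfCycleType_parts (isPairingOn_f1 n) hf3),
    ncard_stablePartitions_eq_Rbar (isPairingOn_f2 n) hf3
      (halfCycleType_parts (isPairingOn_f2 n) hf3)]

theorem Lcount_eq_card_filter (n : ℕ) (lam mu : Nat.Partition n) :
    Lcount n lam mu = ((pairings n).filter fun f3 =>
      (halfCycleType n (f1 n) f3, halfCycleType n f2 f3) = (lam, mu)).card := by
  rw [Lcount, ← Set.ncard_coe_finset]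
  congr 1
  ext f3
  simp only [coe_filter, mem_pairings, Set.mem_ofPred_eq, Prod.mk.injEq]
  refine and_congr_right fun hf3 => ?_
  rw [hasCycleTypeOn_add_self_iff_halfCycleType (isPairingOn_f1 n) hf3.1,
    hasCycleTypeOn_add_self_iff_halfCycleType (isPairingOn_f2 n) hf3.1]

end Hypermap

theorem LPtype_eq_sum_general (n : ℕ) (ν ρ : Nat.Partition n) :
    LPtype n ν.parts ρ.parts =
      ∑ lam : Nat.Partition n, ∑ mu : Nat.Partition n,
        Rbar lam ν * Rbar mu ρ * Lcount n lam mu := by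
  open Hypermap Finset in
  calc LPtype n ν.parts ρ.parts
      = ∑ f3 ∈ pairings n, Rbar (halfCycleType n (f1 n) f3) ν * Rbar (halfCycleType n f2 f3) ρ :=
        LPtype_eq_sum_Rbar_mul n ν ρ
    _ = ∑ p : Nat.Partition n × Nat.Partition n,
          ∑ f3 ∈ pairings n with (halfCycleType n (f1 n) f3, halfCycleType n f2 f3) = p,
            Rbar p.1 ν * Rbar p.2 ρ :=
        (sum_fiberwise' (pairings n) (fun f3 => (halfCycleType n (f1 n) f3, halfCycleType n f2 f3))
          fun p => Rbar p.1 ν * Rbar p.2 ρ).symm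
    _ = _ := by
        rw [Fintype.sum_prod_type]
        refine sum_congr rfl fun lam _ => sum_congr rfl fun mu _ => ?_
        rw [sum_const, smul_eq_mul, Lcount_eq_card_filter, mul_comm]

/-- **Proposition 1**: `LP^n_{ν,ρ} = Σ_{λ,μ ⊢ n} R̄_{λ,ν}·R̄_{μ,ρ}·L^n_{λ,μ}`. -/
theorem LPtype_eq_sum (n : ℕ) (hn : 1 ≤ n) (ν ρ : Nat.Partition n) :
    LPtype n ν.parts ρ.parts =
      ∑ lam : Nat.Partition n, ∑ mu : Nat.Partition n,
        Rbar lam ν * Rbar mu ρ * Lcount n lam mu :=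
  LPtype_eq_sum_general n ν ρ
end

section
/- Let n ≥ 1, let ν, ρ be partitions of n, and let (f3,π1,π2) be a locally orientable partitioned hypermap of type (ν,ρ) with block-classification arrays A = (P,P',Q,Q'). Then: (a) for every i, the number of parts of ν equal to i is Σ_{j,k}(P_{ijk}+P'_{ijk}) and the number of parts of ρ equal to i is Σ_{j,k}(Q_{ijk}+Q'_{ijk}); (b) Σ_{i,j,k}(j+k)(P_{ijk}+P'_{ijk}) = Σ_{i,j,k}(j+k)(Q_{ijk}+Q'_{ijk}); (c) Σ_{i,j,k} Q'_{ijk} = Σ_{i,j,k} j·(P_{ijk}+P'_{ijk}); (d) Σ_{i,j,k} P'_{ijk} = Σ_{i,j,k} j·(Q_{ijk}+Q'_{ijk}); and (e) Σ_{i,j,k} P_{ijk} ≥ 1. -/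
open scoped BigOperators

/-- Generic: image of a fixed-point-free involution-stable set under pairing map has half card. -/
lemma image_pair_card (f : ℕ → ℕ) (T : Finset ℕ)
    (hstab : ∀ u ∈ T, f u ∈ T) (hinv : ∀ u ∈ T, f (f u) = u) (hne : ∀ u ∈ T, f u ≠ u) :
    (T.image fun u => ({u, f u} : Finset ℕ)).card * 2 = T.card := by
  classical
  rw [Finset.card_eq_sum_card_image (fun u => ({u, f u} : Finset ℕ)) T]
  rw [Finset.sum_congr rfl (g := fun _ => 2) ?_]
  · rw [Finset.sum_const, smul_eq_mul, mul_comm]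
  · intro s hs
    obtain ⟨u, hu, rfl⟩ := Finset.mem_image.1 hs
    have hfib : T.filter (fun v => ({v, f v} : Finset ℕ) = {u, f u}) = {u, f u} := by
      ext v
      simp only [Finset.mem_filter, Finset.mem_insert, Finset.mem_singleton]
      constructor
      · rintro ⟨hv, heq⟩
        have : v ∈ ({v, f v} : Finset ℕ) := Finset.mem_insert_self _ _
        rw [heq] at this
        simpa using this
      · rintro (rfl | rfl)
        · exact ⟨hu, rfl⟩
        · refine ⟨hstab u hu, ?_⟩
          rw [hinv u hu, Finset.pair_comm]
    rw [hfib, Finset.card_pair (Ne.symm (hne u hu))]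

/-- A parity-swapping involution on `B` forces equal numbers of evens and odds. -/
lemma card_filter_parity_eq (g : ℕ → ℕ) (B : Finset ℕ)
    (hg : ∀ x ∈ B, g x ∈ B ∧ g (g x) = x ∧ g x % 2 = (x + 1) % 2) :
    (B.filter fun x => x % 2 = 0).card = (B.filter fun x => x % 2 = 1).card := by
  classical
  apply Finset.card_bij' (fun x _ => g x) (fun x _ => g x)
  · intro a ha
    rw [Finset.mem_filter] at ha ⊢
    obtain ⟨h1, _, h3⟩ := hg a ha.1
    exact ⟨h1, by omega⟩
  · intro a ha
    rw [Finset.mem_filter] at ha ⊢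
    obtain ⟨h1, _, h3⟩ := hg a ha.1
    exact ⟨h1, by omega⟩
  · intro a ha
    rw [Finset.mem_filter] at ha
    exact (hg a ha.1).2.1
  · intro a ha
    rw [Finset.mem_filter] at ha
    exact (hg a ha.1).2.1

/-- Summing filtered cardinalities over the blocks of a partition. -/
lemma sum_card_filter_eq (n : ℕ) (π : Finset (Finset ℕ)) (hπ : IsSetPartition n π)
    (q : ℕ → Prop) [DecidablePred q] :
    ∑ B ∈ π, (B.filter q).card = ((groundSet n).filter q).card := by
  classical
  set blk : ℕ → Finset ℕ := fun x => if h : ∃ B ∈ π, x ∈ B then h.choose else ∅ with hblkdef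
  have hblk1 : ∀ x, (h : ∃ B ∈ π, x ∈ B) → blk x ∈ π ∧ x ∈ blk x := by
    intro x h
    simp only [hblkdef, dif_pos h]
    exact ⟨h.choose_spec.1, h.choose_spec.2⟩
  have hblk : ∀ x ∈ groundSet n, ∀ B ∈ π, (x ∈ B ↔ blk x = B) := by
    intro x hx B hB
    obtain ⟨C, hC, huniq⟩ := hπ.2.2 x hx
    have hex : ∃ B ∈ π, x ∈ B := ⟨C, hC.1, hC.2⟩
    obtain ⟨h1, h2⟩ := hblk1 x hex
    constructor
    · intro hxB
      rw [huniq B ⟨hB, hxB⟩, huniq (blk x) ⟨h1, h2⟩]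
    · intro h; rw [← h]; exact h2
  have hmaps : ∀ x ∈ (groundSet n).filter q, blk x ∈ π := by
    intro x hx
    have hxg := (Finset.mem_filter.1 hx).1
    obtain ⟨C, hC, _⟩ := hπ.2.2 x hxg
    exact (hblk1 x ⟨C, hC.1, hC.2⟩).1
  rw [Finset.card_eq_sum_card_fiberwise hmaps]
  apply Finset.sum_congr rfl
  intro B hB
  congr 1
  ext x
  constructor
  · intro hx
    rw [Finset.mem_filter] at hx
    have hxg := hπ.2.1 B hB hx.1
    rw [Finset.mem_filter, Finset.mem_filter]
    exact ⟨⟨hxg, hx.2⟩, (hblk x hxg B hB).1 hx.1⟩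
  · intro hx
    rw [Finset.mem_filter, Finset.mem_filter] at hx
    rw [Finset.mem_filter]
    exact ⟨(hblk x hx.1.1 B hB).2 hx.2, hx.1.2⟩

lemma f1_spec (n : ℕ) (hn : 1 ≤ n) (x : ℕ) (hx : x ∈ groundSet n) :
    f1 n x ∈ groundSet n ∧ f1 n (f1 n x) = x ∧ f1 n x % 2 = (x + 1) % 2 := by
  simp only [groundSet, Finset.mem_Icc] at hx ⊢
  by_cases h1 : x = 2 * n
  · subst h1
    have e1 : f1 n (2 * n) = 1 := by simp only [f1]; split_ifs <;> omega
    have e2 : f1 n 1 = 2 * n := by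
      simp only [f1]
      split_ifs <;> omega
    rw [e1, e2]
    exact ⟨by omega, rfl, by omega⟩
  by_cases h2 : x = 1
  · subst h2
    have e1 : f1 n 1 = 2 * n := by
      simp only [f1]
      split_ifs <;> omega
    have e2 : f1 n (2 * n) = 1 := by simp only [f1]; split_ifs <;> omega
    rw [e1, e2]
    exact ⟨by omega, rfl, by omega⟩
  by_cases h3 : x % 2 = 0
  · have e1 : f1 n x = x + 1 := by
      simp only [f1]
      split_ifs <;> omega
    have e2 : f1 n (x + 1) = x := by
      simp only [f1]
      split_ifs <;> omega
    rw [e1, e2]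
    exact ⟨by omega, rfl, by omega⟩
  · have e1 : f1 n x = x - 1 := by
      simp only [f1]
      split_ifs <;> omega
    have e2 : f1 n (x - 1) = x := by
      simp only [f1]
      split_ifs <;> omega
    rw [e1, e2]
    exact ⟨by omega, rfl, by omega⟩

lemma f2_spec (n : ℕ) (x : ℕ) (hx : x ∈ groundSet n) :
    f2 x ∈ groundSet n ∧ f2 (f2 x) = x ∧ f2 x % 2 = (x + 1) % 2 := by
  simp only [groundSet, Finset.mem_Icc] at hx ⊢
  by_cases h : x % 2 = 0
  · have e1 : f2 x = x - 1 := by simp only [f2]; split_ifs <;> omega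
    have e2 : f2 (x - 1) = x := by
      simp only [f2]
      split_ifs <;> omega
    rw [e1, e2]
    exact ⟨by omega, rfl, by omega⟩
  · have e1 : f2 x = x + 1 := by simp only [f2]; split_ifs <;> omega
    have e2 : f2 (x + 1) = x := by
      simp only [f2]
      split_ifs <;> omega
    rw [e1, e2]
    exact ⟨by omega, rfl, by omega⟩

/-- Basic facts about a block stable under `f3` and a parity-swapping involution. -/
lemma block_basic (n : ℕ) (f3 : ℕ → ℕ) (hf3 : IsPairing n f3) (B : Finset ℕ)
    (hBg : B ⊆ groundSet n) (g : ℕ → ℕ)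
    (hg : ∀ x ∈ B, g x ∈ B ∧ g (g x) = x ∧ g x % 2 = (x + 1) % 2)
    (hf3B : ∀ x ∈ B, f3 x ∈ B) :
    nnPairs f3 B * 2 = (B.filter fun u => u % 2 = 1 ∧ f3 u % 2 = 1 ∧ f3 u ∈ B).card ∧
    hhPairs f3 B * 2 = (B.filter fun u => u % 2 = 0 ∧ f3 u % 2 = 0 ∧ f3 u ∈ B).card ∧
    nnPairs f3 B = hhPairs f3 B ∧
    B.card = 2 * (B.card / 2) ∧
    (B.filter fun x => x % 2 = 0).card = (B.filter fun x => x % 2 = 1).card := by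
  classical
  have hEO := card_filter_parity_eq g B hg
  have hf : ∀ u ∈ B, f3 u ∈ B ∧ f3 (f3 u) = u ∧ f3 u ≠ u := fun u hu =>
    ⟨hf3B u hu, ((hf3.1 u (hBg hu)).2.1), ((hf3.1 u (hBg hu)).2.2)⟩
  -- the four sub-filters
  set Too := B.filter fun u => u % 2 = 1 ∧ f3 u % 2 = 1 ∧ f3 u ∈ B with hToo
  set Tee := B.filter fun u => u % 2 = 0 ∧ f3 u % 2 = 0 ∧ f3 u ∈ B with hTee
  have hnn : nnPairs f3 B * 2 = Too.card := by
    apply image_pair_card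
    · intro u hu
      rw [Finset.mem_filter] at hu ⊢
      exact ⟨hu.2.2.2, hu.2.2.1, by rw [(hf u hu.1).2.1]; exact ⟨hu.2.1, hu.1⟩⟩
    · intro u hu
      rw [Finset.mem_filter] at hu
      exact (hf u hu.1).2.1
    · intro u hu
      rw [Finset.mem_filter] at hu
      exact (hf u hu.1).2.2
  have hhh : hhPairs f3 B * 2 = Tee.card := by
    apply image_pair_card
    · intro u hu
      rw [Finset.mem_filter] at hu ⊢
      exact ⟨hu.2.2.2, hu.2.2.1, by rw [(hf u hu.1).2.1]; exact ⟨hu.2.1, hu.1⟩⟩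
    · intro u hu
      rw [Finset.mem_filter] at hu
      exact (hf u hu.1).2.1
    · intro u hu
      rw [Finset.mem_filter] at hu
      exact (hf u hu.1).2.2
  -- mixed pairs
  have hmix : (B.filter fun u => u % 2 = 1 ∧ f3 u % 2 = 0).card
      = (B.filter fun u => u % 2 = 0 ∧ f3 u % 2 = 1).card := by
    apply Finset.card_bij' (fun x _ => f3 x) (fun x _ => f3 x)
    · intro a ha
      rw [Finset.mem_filter] at ha ⊢
      exact ⟨(hf a ha.1).1, ha.2.2, by rw [(hf a ha.1).2.1]; exact ha.2.1⟩
    · intro a ha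
      rw [Finset.mem_filter] at ha ⊢
      exact ⟨(hf a ha.1).1, ha.2.2, by rw [(hf a ha.1).2.1]; exact ha.2.1⟩
    · intro a ha
      rw [Finset.mem_filter] at ha
      exact (hf a ha.1).2.1
    · intro a ha
      rw [Finset.mem_filter] at ha
      exact (hf a ha.1).2.1
  -- decompositions
  have hOdec : (B.filter fun x => x % 2 = 1).card
      = Too.card + (B.filter fun u => u % 2 = 1 ∧ f3 u % 2 = 0).card := by
    rw [hToo]
    have h1 : Finset.filter (fun u => u % 2 = 1 ∧ f3 u % 2 = 1 ∧ f3 u ∈ B) B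
        = Finset.filter (fun u => f3 u % 2 = 1) (Finset.filter (fun x => x % 2 = 1) B) := by
      rw [Finset.filter_filter]
      apply Finset.filter_congr
      intro u hu
      constructor
      · rintro ⟨h1, h2, _⟩; exact ⟨h1, h2⟩
      · rintro ⟨h1, h2⟩; exact ⟨h1, h2, hf3B u hu⟩
    have h2 : Finset.filter (fun u => u % 2 = 1 ∧ f3 u % 2 = 0) B
        = Finset.filter (fun u => ¬ (f3 u % 2 = 1)) (Finset.filter (fun x => x % 2 = 1) B) := by
      rw [Finset.filter_filter]
      apply Finset.filter_congr
      intro u hu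
      constructor
      · rintro ⟨h1, h2⟩; exact ⟨h1, by omega⟩
      · rintro ⟨h1, h2⟩; exact ⟨h1, by omega⟩
    rw [h1, h2, Finset.card_filter_add_card_filter_not]
  have hEdec : (B.filter fun x => x % 2 = 0).card
      = Tee.card + (B.filter fun u => u % 2 = 0 ∧ f3 u % 2 = 1).card := by
    rw [hTee]
    have h1 : Finset.filter (fun u => u % 2 = 0 ∧ f3 u % 2 = 0 ∧ f3 u ∈ B) B
        = Finset.filter (fun u => f3 u % 2 = 0) (Finset.filter (fun x => x % 2 = 0) B) := by
      rw [Finset.filter_filter]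
      apply Finset.filter_congr
      intro u hu
      constructor
      · rintro ⟨h1, h2, _⟩; exact ⟨h1, h2⟩
      · rintro ⟨h1, h2⟩; exact ⟨h1, h2, hf3B u hu⟩
    have h2 : Finset.filter (fun u => u % 2 = 0 ∧ f3 u % 2 = 1) B
        = Finset.filter (fun u => ¬ (f3 u % 2 = 0)) (Finset.filter (fun x => x % 2 = 0) B) := by
      rw [Finset.filter_filter]
      apply Finset.filter_congr
      intro u hu
      constructor
      · rintro ⟨h1, h2⟩; exact ⟨h1, by omega⟩
      · rintro ⟨h1, h2⟩; exact ⟨h1, by omega⟩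
    rw [h1, h2, Finset.card_filter_add_card_filter_not]
  have hcard : B.card = (B.filter fun x => x % 2 = 0).card + (B.filter fun x => x % 2 = 1).card := by
    have heq : Finset.filter (fun a => ¬ a % 2 = 0) B = Finset.filter (fun x => x % 2 = 1) B := by
      apply Finset.filter_congr
      intro u _
      constructor
      · intro h; omega
      · intro h; omega
    rw [← Finset.card_filter_add_card_filter_not (fun x => x % 2 = 0), heq]
  refine ⟨hnn, hhh, by omega, by omega, hEO⟩

lemma evens_odds_nonempty (B : Finset ℕ) (hne : B.Nonempty)
    (hEO : (B.filter fun x => x % 2 = 0).card = (B.filter fun x => x % 2 = 1).card) :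
    (B.filter fun x => x % 2 = 0).Nonempty ∧ (B.filter fun x => x % 2 = 1).Nonempty := by
  obtain ⟨x, hx⟩ := hne
  by_cases h : x % 2 = 0
  · have hxE : x ∈ B.filter fun x => x % 2 = 0 := Finset.mem_filter.2 ⟨hx, h⟩
    refine ⟨⟨x, hxE⟩, Finset.card_pos.1 ?_⟩
    rw [← hEO]
    exact Finset.card_pos.2 ⟨x, hxE⟩
  · have hxO : x ∈ B.filter fun x => x % 2 = 1 := Finset.mem_filter.2 ⟨hx, by omega⟩
    refine ⟨Finset.card_pos.1 ?_, ⟨x, hxO⟩⟩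
    rw [hEO]
    exact Finset.card_pos.2 ⟨x, hxO⟩

lemma maxEven_spec (B : Finset ℕ) (hE : (B.filter fun x => x % 2 = 0).Nonempty) :
    maxEven B ∈ B ∧ maxEven B % 2 = 0 := by
  obtain ⟨b, hb, heq⟩ := Finset.exists_mem_eq_sup _ hE id
  rw [maxEven, heq]
  exact ⟨(Finset.mem_filter.1 hb).1, (Finset.mem_filter.1 hb).2⟩

lemma maxOdd_spec (B : Finset ℕ) (hO : (B.filter fun x => x % 2 = 1).Nonempty) :
    maxOdd B ∈ B ∧ maxOdd B % 2 = 1 := by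
  obtain ⟨b, hb, heq⟩ := Finset.exists_mem_eq_sup _ hO id
  rw [maxOdd, heq]
  exact ⟨(Finset.mem_filter.1 hb).1, (Finset.mem_filter.1 hb).2⟩

/-- The block-basic facts for a block of `π1`. -/
lemma pi1_block (n : ℕ) (hn : 1 ≤ n) (f3 : ℕ → ℕ) (π1 π2 : Finset (Finset ℕ))
    (hmap : IsLOPH n f3 π1 π2) (B : Finset ℕ) (hB : B ∈ π1) :
    nnPairs f3 B * 2 = (B.filter fun u => u % 2 = 1 ∧ f3 u % 2 = 1 ∧ f3 u ∈ B).card ∧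
    hhPairs f3 B * 2 = (B.filter fun u => u % 2 = 0 ∧ f3 u % 2 = 0 ∧ f3 u ∈ B).card ∧
    nnPairs f3 B = hhPairs f3 B ∧
    B.card = 2 * (B.card / 2) ∧
    (B.filter fun x => x % 2 = 0).card = (B.filter fun x => x % 2 = 1).card := by
  have hBg : B ⊆ groundSet n := hmap.2.1.2.1 B hB
  exact block_basic n f3 hmap.1 B hBg (f1 n)
    (fun x hx => ⟨(hmap.2.2.2.1 B hB).1 x hx,
      (f1_spec n hn x (hBg hx)).2.1, (f1_spec n hn x (hBg hx)).2.2⟩)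
    (hmap.2.2.2.1 B hB).2

/-- The block-basic facts for a block of `π2`. -/
lemma pi2_block (n : ℕ) (hn : 1 ≤ n) (f3 : ℕ → ℕ) (π1 π2 : Finset (Finset ℕ))
    (hmap : IsLOPH n f3 π1 π2) (B : Finset ℕ) (hB : B ∈ π2) :
    nnPairs f3 B * 2 = (B.filter fun u => u % 2 = 1 ∧ f3 u % 2 = 1 ∧ f3 u ∈ B).card ∧
    hhPairs f3 B * 2 = (B.filter fun u => u % 2 = 0 ∧ f3 u % 2 = 0 ∧ f3 u ∈ B).card ∧
    nnPairs f3 B = hhPairs f3 B ∧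
    B.card = 2 * (B.card / 2) ∧
    (B.filter fun x => x % 2 = 0).card = (B.filter fun x => x % 2 = 1).card := by
  have hBg : B ⊆ groundSet n := hmap.2.2.1.2.1 B hB
  exact block_basic n f3 hmap.1 B hBg f2
    (fun x hx => ⟨(hmap.2.2.2.2 B hB).1 x hx,
      (f2_spec n x (hBg hx)).2.1, (f2_spec n x (hBg hx)).2.2⟩)
    (hmap.2.2.2.2 B hB).2

lemma jCount1_facts (n : ℕ) (hn : 1 ≤ n) (f3 : ℕ → ℕ) (π1 π2 : Finset (Finset ℕ))
    (hmap : IsLOPH n f3 π1 π2) (B : Finset ℕ) (hB : B ∈ π1) :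
    jCount1 f3 π2 B = (B.filter fun t => t % 2 = 0 ∧ f3 t % 2 = 0 ∧ f3 t ∈ B ∧
      ∃ C ∈ π2, t ∈ C ∧ t = maxEven C).card ∧
    jCount1 f3 π2 B ≤ nnPairs f3 B := by
  classical
  have hBg : B ⊆ groundSet n := hmap.2.1.2.1 B hB
  constructor
  · rw [jCount1]
    apply Finset.card_image_of_injOn
    intro t1 ht1 t2 ht2 heq
    rw [Finset.mem_coe, Finset.mem_filter] at ht1 ht2
    have heq' : ({t1, f3 t1} : Finset ℕ) = {t2, f3 t2} := heq
    have h1 : t1 ∈ ({t2, f3 t2} : Finset ℕ) := by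
      rw [← heq']
      exact Finset.mem_insert_self _ _
    rcases Finset.mem_insert.1 h1 with h | h
    · exact h
    · have h' := Finset.mem_singleton.1 h
      obtain ⟨ht1B, _, _, _, C1, hC1, ht1C1, ht1max⟩ := ht1
      obtain ⟨ht2B, _, _, _, C2, hC2, ht2C2, ht2max⟩ := ht2
      have hft2 : f3 t2 ∈ C2 := (hmap.2.2.2.2 C2 hC2).2 t2 ht2C2
      have ht1C2 : t1 ∈ C2 := by rw [h']; exact hft2
      obtain ⟨D, _, huniq⟩ := hmap.2.2.1.2.2 t1 (hBg ht1B)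
      have e1 : C1 = D := huniq C1 ⟨hC1, ht1C1⟩
      have e2 : C2 = D := huniq C2 ⟨hC2, ht1C2⟩
      rw [ht1max, ht2max, e1, e2]
  · have hblk := pi1_block n hn f3 π1 π2 hmap B hB
    have hsub : (B.filter fun t => t % 2 = 0 ∧ f3 t % 2 = 0 ∧ f3 t ∈ B ∧
        ∃ C ∈ π2, t ∈ C ∧ t = maxEven C) ⊆
        B.filter fun u => u % 2 = 0 ∧ f3 u % 2 = 0 ∧ f3 u ∈ B := by
      intro t ht
      rw [Finset.mem_filter] at ht ⊢
      exact ⟨ht.1, ht.2.1, ht.2.2.1, ht.2.2.2.1⟩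
    calc jCount1 f3 π2 B ≤ hhPairs f3 B := by
          rw [jCount1, hhPairs]
          exact Finset.card_le_card (Finset.image_subset_image hsub)
      _ = nnPairs f3 B := hblk.2.2.1.symm

lemma jCount2_facts (n : ℕ) (hn : 1 ≤ n) (f3 : ℕ → ℕ) (π1 π2 : Finset (Finset ℕ))
    (hmap : IsLOPH n f3 π1 π2) (B : Finset ℕ) (hB : B ∈ π2) :
    jCount2 f3 π1 B = (B.filter fun t => t % 2 = 1 ∧ f3 t % 2 = 1 ∧ f3 t ∈ B ∧
      ∃ C ∈ π1, 1 ∉ C ∧ t ∈ C ∧ t = maxOdd C).card ∧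
    jCount2 f3 π1 B ≤ hhPairs f3 B := by
  classical
  have hBg : B ⊆ groundSet n := hmap.2.2.1.2.1 B hB
  constructor
  · rw [jCount2]
    apply Finset.card_image_of_injOn
    intro t1 ht1 t2 ht2 heq
    rw [Finset.mem_coe, Finset.mem_filter] at ht1 ht2
    have heq' : ({t1, f3 t1} : Finset ℕ) = {t2, f3 t2} := heq
    have h1 : t1 ∈ ({t2, f3 t2} : Finset ℕ) := by
      rw [← heq']
      exact Finset.mem_insert_self _ _
    rcases Finset.mem_insert.1 h1 with h | h
    · exact h
    · have h' := Finset.mem_singleton.1 h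
      obtain ⟨ht1B, _, _, _, C1, hC1, _, ht1C1, ht1max⟩ := ht1
      obtain ⟨ht2B, _, _, _, C2, hC2, _, ht2C2, ht2max⟩ := ht2
      have hft2 : f3 t2 ∈ C2 := (hmap.2.2.2.1 C2 hC2).2 t2 ht2C2
      have ht1C2 : t1 ∈ C2 := by rw [h']; exact hft2
      obtain ⟨D, _, huniq⟩ := hmap.2.1.2.2 t1 (hBg ht1B)
      have e1 : C1 = D := huniq C1 ⟨hC1, ht1C1⟩
      have e2 : C2 = D := huniq C2 ⟨hC2, ht1C2⟩
      rw [ht1max, ht2max, e1, e2]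
  · have hblk := pi2_block n hn f3 π1 π2 hmap B hB
    have hsub : (B.filter fun t => t % 2 = 1 ∧ f3 t % 2 = 1 ∧ f3 t ∈ B ∧
        ∃ C ∈ π1, 1 ∉ C ∧ t ∈ C ∧ t = maxOdd C) ⊆
        B.filter fun u => u % 2 = 1 ∧ f3 u % 2 = 1 ∧ f3 u ∈ B := by
      intro t ht
      rw [Finset.mem_filter] at ht ⊢
      exact ⟨ht.1, ht.2.1, ht.2.2.1, ht.2.2.2.1⟩
    calc jCount2 f3 π1 B ≤ nnPairs f3 B := by
          rw [jCount2, nnPairs]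
          exact Finset.card_le_card (Finset.image_subset_image hsub)
      _ = hhPairs f3 B := hblk.2.2.1

/-- Index set containing all possible parameter triples. -/
def S3 (n : ℕ) : Finset (ℕ × ℕ × ℕ) :=
  Finset.range (2 * n + 1) ×ˢ (Finset.range (2 * n + 1) ×ˢ Finset.range (2 * n + 1))

def phi1 (f3 : ℕ → ℕ) (π2 : Finset (Finset ℕ)) (B : Finset ℕ) : ℕ × ℕ × ℕ :=
  (B.card / 2, jCount1 f3 π2 B, nnPairs f3 B - jCount1 f3 π2 B)

def phi2 (f3 : ℕ → ℕ) (π1 : Finset (Finset ℕ)) (B : Finset ℕ) : ℕ × ℕ × ℕ :=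
  (B.card / 2, jCount2 f3 π1 B, hhPairs f3 B - jCount2 f3 π1 B)

lemma card_groundSet (n : ℕ) : (groundSet n).card = 2 * n := by
  simp [groundSet]

lemma phi1_mem (n : ℕ) (hn : 1 ≤ n) (f3 : ℕ → ℕ) (π1 π2 : Finset (Finset ℕ))
    (hmap : IsLOPH n f3 π1 π2) (B : Finset ℕ) (hB : B ∈ π1) :
    phi1 f3 π2 B ∈ S3 n := by
  have hBg : B ⊆ groundSet n := hmap.2.1.2.1 B hB
  have hcard : B.card ≤ 2 * n := by
    calc B.card ≤ (groundSet n).card := Finset.card_le_card hBg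
      _ = 2 * n := card_groundSet n
  have hblk := pi1_block n hn f3 π1 π2 hmap B hB
  have hnn : nnPairs f3 B ≤ 2 * n := by
    have h1 : (B.filter fun u => u % 2 = 1 ∧ f3 u % 2 = 1 ∧ f3 u ∈ B).card ≤ B.card :=
      Finset.card_le_card (Finset.filter_subset _ _)
    omega
  have hj := (jCount1_facts n hn f3 π1 π2 hmap B hB).2
  simp only [S3, phi1, Finset.mem_product, Finset.mem_range]
  refine ⟨by omega, by omega, by omega⟩

lemma phi2_mem (n : ℕ) (hn : 1 ≤ n) (f3 : ℕ → ℕ) (π1 π2 : Finset (Finset ℕ))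
    (hmap : IsLOPH n f3 π1 π2) (B : Finset ℕ) (hB : B ∈ π2) :
    phi2 f3 π1 B ∈ S3 n := by
  have hBg : B ⊆ groundSet n := hmap.2.2.1.2.1 B hB
  have hcard : B.card ≤ 2 * n := by
    calc B.card ≤ (groundSet n).card := Finset.card_le_card hBg
      _ = 2 * n := card_groundSet n
  have hblk := pi2_block n hn f3 π1 π2 hmap B hB
  have hhhle : hhPairs f3 B ≤ 2 * n := by
    have h1 : (B.filter fun u => u % 2 = 0 ∧ f3 u % 2 = 0 ∧ f3 u ∈ B).card ≤ B.card :=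
      Finset.card_le_card (Finset.filter_subset _ _)
    omega
  have hj := (jCount2_facts n hn f3 π1 π2 hmap B hB).2
  simp only [S3, phi2, Finset.mem_product, Finset.mem_range]
  refine ⟨by omega, by omega, by omega⟩

lemma class1 (n : ℕ) (hn : 1 ≤ n) (f3 : ℕ → ℕ) (π1 π2 : Finset (Finset ℕ))
    (hmap : IsLOPH n f3 π1 π2) (B : Finset ℕ) (hB : B ∈ π1) (t : ℕ × ℕ × ℕ) :
    (B.card = 2 * t.1 ∧ jCount1 f3 π2 B = t.2.1 ∧ nnPairs f3 B = t.2.1 + t.2.2) ↔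
      phi1 f3 π2 B = t := by
  have heven := (pi1_block n hn f3 π1 π2 hmap B hB).2.2.2.1
  have hj := (jCount1_facts n hn f3 π1 π2 hmap B hB).2
  obtain ⟨i, j, k⟩ := t
  simp only [phi1, Prod.mk.injEq]
  constructor
  · rintro ⟨h1, h2, h3⟩
    refine ⟨by omega, by omega, by omega⟩
  · rintro ⟨h1, h2, h3⟩
    refine ⟨by omega, by omega, by omega⟩

lemma class2 (n : ℕ) (hn : 1 ≤ n) (f3 : ℕ → ℕ) (π1 π2 : Finset (Finset ℕ))
    (hmap : IsLOPH n f3 π1 π2) (B : Finset ℕ) (hB : B ∈ π2) (t : ℕ × ℕ × ℕ) :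
    (B.card = 2 * t.1 ∧ jCount2 f3 π1 B = t.2.1 ∧ hhPairs f3 B = t.2.1 + t.2.2) ↔
      phi2 f3 π1 B = t := by
  have heven := (pi2_block n hn f3 π1 π2 hmap B hB).2.2.2.1
  have hj := (jCount2_facts n hn f3 π1 π2 hmap B hB).2
  obtain ⟨i, j, k⟩ := t
  simp only [phi2, Prod.mk.injEq]
  constructor
  · rintro ⟨h1, h2, h3⟩
    refine ⟨by omega, by omega, by omega⟩
  · rintro ⟨h1, h2, h3⟩
    refine ⟨by omega, by omega, by omega⟩

lemma fiber_sum_pi1 (n : ℕ) (hn : 1 ≤ n) (f3 : ℕ → ℕ) (π1 π2 : Finset (Finset ℕ))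
    (hmap : IsLOPH n f3 π1 π2) (p : Finset ℕ → Prop) [DecidablePred p] (w : ℕ × ℕ × ℕ → ℕ) :
    ∑ t ∈ S3 n, w t * (π1.filter fun B => p B ∧ B.card = 2 * t.1 ∧
        jCount1 f3 π2 B = t.2.1 ∧ nnPairs f3 B = t.2.1 + t.2.2).card
      = ∑ B ∈ π1.filter p, w (phi1 f3 π2 B) := by
  classical
  rw [← Finset.sum_fiberwise_of_maps_to (g := phi1 f3 π2) (t := S3 n)
    (fun B hB => phi1_mem n hn f3 π1 π2 hmap B (Finset.mem_filter.1 hB).1)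
    (fun B => w (phi1 f3 π2 B))]
  apply Finset.sum_congr rfl
  intro t ht
  have hset : (π1.filter p).filter (fun B => phi1 f3 π2 B = t)
      = π1.filter fun B => p B ∧ B.card = 2 * t.1 ∧
        jCount1 f3 π2 B = t.2.1 ∧ nnPairs f3 B = t.2.1 + t.2.2 := by
    rw [Finset.filter_filter]
    apply Finset.filter_congr
    intro B hB
    rw [← class1 n hn f3 π1 π2 hmap B hB t]
  rw [← hset]
  have hsum : ∑ B ∈ (π1.filter p).filter (fun B => phi1 f3 π2 B = t),
      w (phi1 f3 π2 B) = ∑ _B ∈ (π1.filter p).filter (fun B => phi1 f3 π2 B = t), w t :=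
    Finset.sum_congr rfl (fun B hB => by rw [(Finset.mem_filter.1 hB).2])
  rw [hsum, Finset.sum_const, smul_eq_mul, mul_comm]

lemma fiber_sum_pi2 (n : ℕ) (hn : 1 ≤ n) (f3 : ℕ → ℕ) (π1 π2 : Finset (Finset ℕ))
    (hmap : IsLOPH n f3 π1 π2) (p : Finset ℕ → Prop) [DecidablePred p] (w : ℕ × ℕ × ℕ → ℕ) :
    ∑ t ∈ S3 n, w t * (π2.filter fun B => p B ∧ B.card = 2 * t.1 ∧
        jCount2 f3 π1 B = t.2.1 ∧ hhPairs f3 B = t.2.1 + t.2.2).card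
      = ∑ B ∈ π2.filter p, w (phi2 f3 π1 B) := by
  classical
  rw [← Finset.sum_fiberwise_of_maps_to (g := phi2 f3 π1) (t := S3 n)
    (fun B hB => phi2_mem n hn f3 π1 π2 hmap B (Finset.mem_filter.1 hB).1)
    (fun B => w (phi2 f3 π1 B))]
  apply Finset.sum_congr rfl
  intro t ht
  have hset : (π2.filter p).filter (fun B => phi2 f3 π1 B = t)
      = π2.filter fun B => p B ∧ B.card = 2 * t.1 ∧
        jCount2 f3 π1 B = t.2.1 ∧ hhPairs f3 B = t.2.1 + t.2.2 := by
    rw [Finset.filter_filter]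
    apply Finset.filter_congr
    intro B hB
    rw [← class2 n hn f3 π1 π2 hmap B hB t]
  rw [← hset]
  have hsum : ∑ B ∈ (π2.filter p).filter (fun B => phi2 f3 π1 B = t),
      w (phi2 f3 π1 B) = ∑ _B ∈ (π2.filter p).filter (fun B => phi2 f3 π1 B = t), w t :=
    Finset.sum_congr rfl (fun B hB => by rw [(Finset.mem_filter.1 hB).2])
  rw [hsum, Finset.sum_const, smul_eq_mul, mul_comm]

lemma bridge_b (n : ℕ) (hn : 1 ≤ n) (f3 : ℕ → ℕ) (π1 π2 : Finset (Finset ℕ))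
    (hmap : IsLOPH n f3 π1 π2) :
    ∑ B ∈ π1, nnPairs f3 B = ∑ B ∈ π2, hhPairs f3 B := by
  classical
  have key : ∀ (π : Finset (Finset ℕ)), IsSetPartition n π →
      (∀ B ∈ π, StableUnder f3 B) →
      (∀ B ∈ π, hhPairs f3 B * 2 =
        (B.filter fun u => u % 2 = 0 ∧ f3 u % 2 = 0 ∧ f3 u ∈ B).card) →
      (∑ B ∈ π, hhPairs f3 B) * 2 =
        ((groundSet n).filter fun u => u % 2 = 0 ∧ f3 u % 2 = 0).card := by
    intro π hπ hstab hval
    have h1 : ∀ B ∈ π, (B.filter fun u => u % 2 = 0 ∧ f3 u % 2 = 0 ∧ f3 u ∈ B)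
        = B.filter fun u => u % 2 = 0 ∧ f3 u % 2 = 0 := by
      intro B hB
      apply Finset.filter_congr
      intro u hu
      constructor
      · rintro ⟨a, b, _⟩; exact ⟨a, b⟩
      · rintro ⟨a, b⟩; exact ⟨a, b, hstab B hB u hu⟩
    calc (∑ B ∈ π, hhPairs f3 B) * 2 = ∑ B ∈ π, hhPairs f3 B * 2 := by
          rw [Finset.sum_mul]
      _ = ∑ B ∈ π, (B.filter fun u => u % 2 = 0 ∧ f3 u % 2 = 0).card := by
          apply Finset.sum_congr rfl
          intro B hB
          rw [hval B hB, h1 B hB]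
      _ = ((groundSet n).filter fun u => u % 2 = 0 ∧ f3 u % 2 = 0).card :=
          sum_card_filter_eq n π hπ _
  have k1 := key π1 hmap.2.1 (fun B hB => (hmap.2.2.2.1 B hB).2)
    (fun B hB => (pi1_block n hn f3 π1 π2 hmap B hB).2.1)
  have k2 := key π2 hmap.2.2.1 (fun B hB => (hmap.2.2.2.2 B hB).2)
    (fun B hB => (pi2_block n hn f3 π1 π2 hmap B hB).2.1)
  have k3 : ∑ B ∈ π1, nnPairs f3 B = ∑ B ∈ π1, hhPairs f3 B :=
    Finset.sum_congr rfl (fun B hB => (pi1_block n hn f3 π1 π2 hmap B hB).2.2.1)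
  omega

lemma bridge_c (n : ℕ) (hn : 1 ≤ n) (f3 : ℕ → ℕ) (π1 π2 : Finset (Finset ℕ))
    (hmap : IsLOPH n f3 π1 π2) :
    ∑ B ∈ π1, jCount1 f3 π2 B = (π2.filter fun B => f3 (maxEven B) % 2 = 0).card := by
  classical
  set ψ : ℕ → Prop := fun t => t % 2 = 0 ∧ f3 t % 2 = 0 ∧ ∃ C ∈ π2, t ∈ C ∧ t = maxEven C
    with hψ
  have step1 : ∑ B ∈ π1, jCount1 f3 π2 B = ∑ B ∈ π1, (B.filter ψ).card := by
    apply Finset.sum_congr rfl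
    intro B hB
    rw [(jCount1_facts n hn f3 π1 π2 hmap B hB).1]
    congr 1
    apply Finset.filter_congr
    intro t ht
    constructor
    · rintro ⟨a, b, _, c⟩; exact ⟨a, b, c⟩
    · rintro ⟨a, b, c⟩; exact ⟨a, b, (hmap.2.2.2.1 B hB).2 t ht, c⟩
  rw [step1, sum_card_filter_eq n π1 hmap.2.1 ψ]
  -- bijection with π2-blocks whose maxEven is sent to an even element
  apply Finset.card_bij (fun t _ => if h : ∃ C ∈ π2, t ∈ C ∧ t = maxEven C then h.choose else ∅)
  · intro t ht
    rw [Finset.mem_filter] at ht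
    obtain ⟨htg, _, hft, hex⟩ := ht
    rw [dif_pos hex]
    obtain ⟨hC, htC, htmax⟩ := hex.choose_spec
    rw [Finset.mem_filter]
    exact ⟨hC, by rw [← htmax]; exact hft⟩
  · intro t1 ht1 t2 ht2 heq
    rw [Finset.mem_filter] at ht1 ht2
    obtain ⟨_, _, _, hex1⟩ := ht1
    obtain ⟨_, _, _, hex2⟩ := ht2
    rw [dif_pos hex1, dif_pos hex2] at heq
    obtain ⟨_, _, h1max⟩ := hex1.choose_spec
    obtain ⟨_, _, h2max⟩ := hex2.choose_spec
    rw [h1max, h2max, heq]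
  · intro C hC
    rw [Finset.mem_filter] at hC
    obtain ⟨hC2, hCf⟩ := hC
    have hblk := pi2_block n hn f3 π1 π2 hmap C hC2
    have hEne := (evens_odds_nonempty C (hmap.2.2.1.1 C hC2) hblk.2.2.2.2).1
    have hme := maxEven_spec C hEne
    have hex : ∃ D ∈ π2, maxEven C ∈ D ∧ maxEven C = maxEven D := ⟨C, hC2, hme.1, rfl⟩
    refine ⟨maxEven C, ?_, ?_⟩
    · rw [Finset.mem_filter]
      exact ⟨hmap.2.2.1.2.1 C hC2 hme.1, hme.2, hCf, hex⟩
    · rw [dif_pos hex]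
      obtain ⟨hD2, hmD, hmaxD⟩ := hex.choose_spec
      -- maxEven C lies in both C and the chosen block; uniqueness gives equality
      obtain ⟨E, _, huniq⟩ := hmap.2.2.1.2.2 (maxEven C) (hmap.2.2.1.2.1 C hC2 hme.1)
      rw [huniq _ ⟨hD2, hmD⟩, huniq C ⟨hC2, hme.1⟩]

lemma bridge_d (n : ℕ) (hn : 1 ≤ n) (f3 : ℕ → ℕ) (π1 π2 : Finset (Finset ℕ))
    (hmap : IsLOPH n f3 π1 π2) :
    ∑ B ∈ π2, jCount2 f3 π1 B
      = (π1.filter fun B => 1 ∉ B ∧ f3 (maxOdd B) % 2 = 1).card := by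
  classical
  set ψ : ℕ → Prop := fun t => t % 2 = 1 ∧ f3 t % 2 = 1 ∧ ∃ C ∈ π1, 1 ∉ C ∧ t ∈ C ∧ t = maxOdd C
    with hψ
  have step1 : ∑ B ∈ π2, jCount2 f3 π1 B = ∑ B ∈ π2, (B.filter ψ).card := by
    apply Finset.sum_congr rfl
    intro B hB
    rw [(jCount2_facts n hn f3 π1 π2 hmap B hB).1]
    congr 1
    apply Finset.filter_congr
    intro t ht
    constructor
    · rintro ⟨a, b, _, c⟩; exact ⟨a, b, c⟩
    · rintro ⟨a, b, c⟩; exact ⟨a, b, (hmap.2.2.2.2 B hB).2 t ht, c⟩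
  rw [step1, sum_card_filter_eq n π2 hmap.2.2.1 ψ]
  apply Finset.card_bij (fun t _ => if h : ∃ C ∈ π1, 1 ∉ C ∧ t ∈ C ∧ t = maxOdd C then h.choose else ∅)
  · intro t ht
    rw [Finset.mem_filter] at ht
    obtain ⟨htg, _, hft, hex⟩ := ht
    rw [dif_pos hex]
    obtain ⟨hC, h1C, htC, htmax⟩ := hex.choose_spec
    rw [Finset.mem_filter]
    exact ⟨hC, h1C, by rw [← htmax]; exact hft⟩
  · intro t1 ht1 t2 ht2 heq
    rw [Finset.mem_filter] at ht1 ht2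
    obtain ⟨_, _, _, hex1⟩ := ht1
    obtain ⟨_, _, _, hex2⟩ := ht2
    rw [dif_pos hex1, dif_pos hex2] at heq
    obtain ⟨_, _, _, h1max⟩ := hex1.choose_spec
    obtain ⟨_, _, _, h2max⟩ := hex2.choose_spec
    rw [h1max, h2max, heq]
  · intro C hC
    rw [Finset.mem_filter] at hC
    obtain ⟨hC1, h1C, hCf⟩ := hC
    have hblk := pi1_block n hn f3 π1 π2 hmap C hC1
    have hOne := (evens_odds_nonempty C (hmap.2.1.1 C hC1) hblk.2.2.2.2).2
    have hmo := maxOdd_spec C hOne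
    have hex : ∃ D ∈ π1, 1 ∉ D ∧ maxOdd C ∈ D ∧ maxOdd C = maxOdd D :=
      ⟨C, hC1, h1C, hmo.1, rfl⟩
    refine ⟨maxOdd C, ?_, ?_⟩
    · rw [Finset.mem_filter]
      exact ⟨hmap.2.1.2.1 C hC1 hmo.1, hmo.2, hCf, hex⟩
    · rw [dif_pos hex]
      obtain ⟨hD1, _, hmD, hmaxD⟩ := hex.choose_spec
      obtain ⟨E, _, huniq⟩ := hmap.2.1.2.2 (maxOdd C) (hmap.2.1.2.1 C hC1 hmo.1)
      rw [huniq _ ⟨hD1, hmD⟩, huniq C ⟨hC1, hmo.1⟩]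

lemma card_filter_split (s : Finset (Finset ℕ)) (p q r : Finset ℕ → Prop)
    [DecidablePred p] [DecidablePred q] [DecidablePred r] (hq : ∀ B ∈ s, q B ↔ ¬ p B) :
    (s.filter fun B => p B ∧ r B).card + (s.filter fun B => q B ∧ r B).card
      = (s.filter r).card := by
  classical
  rw [← Finset.card_filter_add_card_filter_not (s := s.filter r) p]
  congr 1
  · congr 1
    rw [Finset.filter_filter]
    apply Finset.filter_congr
    intro B hB
    tauto
  · congr 1
    rw [Finset.filter_filter]
    apply Finset.filter_congr
    intro B hB
    have := hq B hB
    tauto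

lemma sum_t_PP' (n : ℕ) (hn : 1 ≤ n) (f3 : ℕ → ℕ) (π1 π2 : Finset (Finset ℕ))
    (hmap : IsLOPH n f3 π1 π2) (w : ℕ × ℕ × ℕ → ℕ) :
    ∑ t ∈ S3 n, w t * (countP f3 π1 π2 t.1 t.2.1 t.2.2 + countP' f3 π1 π2 t.1 t.2.1 t.2.2)
      = ∑ B ∈ π1, w (phi1 f3 π2 B) := by
  classical
  have step : ∀ t : ℕ × ℕ × ℕ,
      countP f3 π1 π2 t.1 t.2.1 t.2.2 + countP' f3 π1 π2 t.1 t.2.1 t.2.2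
        = (π1.filter fun B => (fun _ => True) B ∧ B.card = 2 * t.1 ∧
            jCount1 f3 π2 B = t.2.1 ∧ nnPairs f3 B = t.2.1 + t.2.2).card := by
    intro t
    rw [countP, countP']
    rw [card_filter_split π1 (fun B => 1 ∈ B ∨ f3 (maxOdd B) % 2 = 0)
      (fun B => 1 ∉ B ∧ f3 (maxOdd B) % 2 = 1) _ ?_]
    · congr 1
      apply Finset.filter_congr
      intro B _
      tauto
    · intro B _
      constructor
      · rintro ⟨h1, h2⟩ (h | h)
        · exact h1 h
        · omega
      · intro h
        have h2 : ¬ (f3 (maxOdd B) % 2 = 0) := fun hh => h (Or.inr hh)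
        exact ⟨fun hm => h (Or.inl hm), by omega⟩
  rw [Finset.sum_congr rfl (fun t _ => by rw [step t])]
  rw [fiber_sum_pi1 n hn f3 π1 π2 hmap (fun _ => True) w]
  rw [Finset.filter_true]

lemma sum_t_QQ' (n : ℕ) (hn : 1 ≤ n) (f3 : ℕ → ℕ) (π1 π2 : Finset (Finset ℕ))
    (hmap : IsLOPH n f3 π1 π2) (w : ℕ × ℕ × ℕ → ℕ) :
    ∑ t ∈ S3 n, w t * (countQ f3 π1 π2 t.1 t.2.1 t.2.2 + countQ' f3 π1 π2 t.1 t.2.1 t.2.2)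
      = ∑ B ∈ π2, w (phi2 f3 π1 B) := by
  classical
  have step : ∀ t : ℕ × ℕ × ℕ,
      countQ f3 π1 π2 t.1 t.2.1 t.2.2 + countQ' f3 π1 π2 t.1 t.2.1 t.2.2
        = (π2.filter fun B => (fun _ => True) B ∧ B.card = 2 * t.1 ∧
            jCount2 f3 π1 B = t.2.1 ∧ hhPairs f3 B = t.2.1 + t.2.2).card := by
    intro t
    rw [countQ, countQ']
    rw [card_filter_split π2 (fun B => f3 (maxEven B) % 2 = 1)
      (fun B => f3 (maxEven B) % 2 = 0) _ ?_]
    · congr 1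
      apply Finset.filter_congr
      intro B _
      tauto
    · intro B _
      omega
  rw [Finset.sum_congr rfl (fun t _ => by rw [step t])]
  rw [fiber_sum_pi2 n hn f3 π1 π2 hmap (fun _ => True) w]
  rw [Finset.filter_true]

lemma sum_t_single_pi1 (n : ℕ) (hn : 1 ≤ n) (f3 : ℕ → ℕ) (π1 π2 : Finset (Finset ℕ))
    (hmap : IsLOPH n f3 π1 π2) (p : Finset ℕ → Prop) [DecidablePred p] :
    ∑ t ∈ S3 n, (π1.filter fun B => p B ∧ B.card = 2 * t.1 ∧
        jCount1 f3 π2 B = t.2.1 ∧ nnPairs f3 B = t.2.1 + t.2.2).card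
      = (π1.filter p).card := by
  have h := fiber_sum_pi1 n hn f3 π1 π2 hmap p (fun _ => 1)
  simp only [one_mul] at h
  rw [h, Finset.sum_const, smul_eq_mul, mul_one]

lemma sum_t_single_pi2 (n : ℕ) (hn : 1 ≤ n) (f3 : ℕ → ℕ) (π1 π2 : Finset (Finset ℕ))
    (hmap : IsLOPH n f3 π1 π2) (p : Finset ℕ → Prop) [DecidablePred p] :
    ∑ t ∈ S3 n, (π2.filter fun B => p B ∧ B.card = 2 * t.1 ∧
        jCount2 f3 π1 B = t.2.1 ∧ hhPairs f3 B = t.2.1 + t.2.2).card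
      = (π2.filter p).card := by
  have h := fiber_sum_pi2 n hn f3 π1 π2 hmap p (fun _ => 1)
  simp only [one_mul] at h
  rw [h, Finset.sum_const, smul_eq_mul, mul_one]

lemma halfType_count (π : Finset (Finset ℕ)) (i : ℕ) :
    (halfType π).count i = (π.filter fun B => B.card / 2 = i).card := by
  classical
  rw [halfType, Multiset.count_map]
  have h : Multiset.filter (fun B => i = B.card / 2) π.val
      = Multiset.filter (fun B => B.card / 2 = i) π.val := by
    apply Multiset.filter_congr
    intro x _
    constructor
    · intro h; omega
    · intro h; omega
  rw [h]
  rfl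

lemma sum_jk_P (n : ℕ) (hn : 1 ≤ n) (f3 : ℕ → ℕ) (π1 π2 : Finset (Finset ℕ))
    (hmap : IsLOPH n f3 π1 π2) (i : ℕ) :
    ∑ jk ∈ Finset.range (2 * n + 1) ×ˢ Finset.range (2 * n + 1),
      (countP f3 π1 π2 i jk.1 jk.2 + countP' f3 π1 π2 i jk.1 jk.2)
      = (π1.filter fun B => B.card / 2 = i).card := by
  classical
  have hmaps : ∀ B ∈ π1.filter (fun B => B.card / 2 = i),
      (phi1 f3 π2 B).2 ∈ Finset.range (2 * n + 1) ×ˢ Finset.range (2 * n + 1) := by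
    intro B hB
    have h := phi1_mem n hn f3 π1 π2 hmap B (Finset.mem_filter.1 hB).1
    rw [S3, Finset.mem_product] at h
    exact h.2
  rw [Finset.card_eq_sum_card_fiberwise hmaps]
  apply Finset.sum_congr rfl
  intro jk hjk
  have step : countP f3 π1 π2 i jk.1 jk.2 + countP' f3 π1 π2 i jk.1 jk.2
      = (π1.filter fun B => B.card = 2 * i ∧
          jCount1 f3 π2 B = jk.1 ∧ nnPairs f3 B = jk.1 + jk.2).card := by
    rw [countP, countP']
    rw [card_filter_split π1 (fun B => 1 ∈ B ∨ f3 (maxOdd B) % 2 = 0)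
      (fun B => 1 ∉ B ∧ f3 (maxOdd B) % 2 = 1) _ ?_]
    intro B _
    constructor
    · rintro ⟨h1, h2⟩ (h | h)
      · exact h1 h
      · omega
    · intro h
      have h2 : ¬ (f3 (maxOdd B) % 2 = 0) := fun hh => h (Or.inr hh)
      exact ⟨fun hm => h (Or.inl hm), by omega⟩
  rw [step]
  congr 1
  rw [Finset.filter_filter]
  apply Finset.filter_congr
  intro B hB
  rw [class1 n hn f3 π1 π2 hmap B hB (i, jk.1, jk.2)]
  rw [Prod.ext_iff]
  constructor
  · intro h
    exact ⟨h.1, by rw [h.2]⟩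
  · intro h
    exact ⟨h.1, by rw [h.2]⟩

lemma sum_jk_Q (n : ℕ) (hn : 1 ≤ n) (f3 : ℕ → ℕ) (π1 π2 : Finset (Finset ℕ))
    (hmap : IsLOPH n f3 π1 π2) (i : ℕ) :
    ∑ jk ∈ Finset.range (2 * n + 1) ×ˢ Finset.range (2 * n + 1),
      (countQ f3 π1 π2 i jk.1 jk.2 + countQ' f3 π1 π2 i jk.1 jk.2)
      = (π2.filter fun B => B.card / 2 = i).card := by
  classical
  have hmaps : ∀ B ∈ π2.filter (fun B => B.card / 2 = i),
      (phi2 f3 π1 B).2 ∈ Finset.range (2 * n + 1) ×ˢ Finset.range (2 * n + 1) := by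
    intro B hB
    have h := phi2_mem n hn f3 π1 π2 hmap B (Finset.mem_filter.1 hB).1
    rw [S3, Finset.mem_product] at h
    exact h.2
  rw [Finset.card_eq_sum_card_fiberwise hmaps]
  apply Finset.sum_congr rfl
  intro jk hjk
  have step : countQ f3 π1 π2 i jk.1 jk.2 + countQ' f3 π1 π2 i jk.1 jk.2
      = (π2.filter fun B => B.card = 2 * i ∧
          jCount2 f3 π1 B = jk.1 ∧ hhPairs f3 B = jk.1 + jk.2).card := by
    rw [countQ, countQ']
    rw [card_filter_split π2 (fun B => f3 (maxEven B) % 2 = 1)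
      (fun B => f3 (maxEven B) % 2 = 0) _ ?_]
    intro B _
    omega
  rw [step]
  congr 1
  rw [Finset.filter_filter]
  apply Finset.filter_congr
  intro B hB
  rw [class2 n hn f3 π1 π2 hmap B hB (i, jk.1, jk.2)]
  rw [Prod.ext_iff]
  constructor
  · intro h
    exact ⟨h.1, by rw [h.2]⟩
  · intro h
    exact ⟨h.1, by rw [h.2]⟩

lemma support_P (n : ℕ) (hn : 1 ≤ n) (f3 : ℕ → ℕ) (π1 π2 : Finset (Finset ℕ))
    (hmap : IsLOPH n f3 π1 π2) (i j k : ℕ) (h : countP f3 π1 π2 i j k ≠ 0) :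
    (i, j, k) ∈ S3 n := by
  obtain ⟨B, hB⟩ := Finset.card_ne_zero.1 h
  rw [Finset.mem_filter] at hB
  obtain ⟨hBπ, _, hc, hj, hnn⟩ := hB
  have hphi := (class1 n hn f3 π1 π2 hmap B hBπ (i, j, k)).1 ⟨hc, hj, hnn⟩
  rw [← hphi]
  exact phi1_mem n hn f3 π1 π2 hmap B hBπ

lemma support_P' (n : ℕ) (hn : 1 ≤ n) (f3 : ℕ → ℕ) (π1 π2 : Finset (Finset ℕ))
    (hmap : IsLOPH n f3 π1 π2) (i j k : ℕ) (h : countP' f3 π1 π2 i j k ≠ 0) :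
    (i, j, k) ∈ S3 n := by
  obtain ⟨B, hB⟩ := Finset.card_ne_zero.1 h
  rw [Finset.mem_filter] at hB
  obtain ⟨hBπ, _, hc, hj, hnn⟩ := hB
  have hphi := (class1 n hn f3 π1 π2 hmap B hBπ (i, j, k)).1 ⟨hc, hj, hnn⟩
  rw [← hphi]
  exact phi1_mem n hn f3 π1 π2 hmap B hBπ

lemma support_Q (n : ℕ) (hn : 1 ≤ n) (f3 : ℕ → ℕ) (π1 π2 : Finset (Finset ℕ))
    (hmap : IsLOPH n f3 π1 π2) (i j k : ℕ) (h : countQ f3 π1 π2 i j k ≠ 0) :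
    (i, j, k) ∈ S3 n := by
  obtain ⟨B, hB⟩ := Finset.card_ne_zero.1 h
  rw [Finset.mem_filter] at hB
  obtain ⟨hBπ, _, hc, hj, hnn⟩ := hB
  have hphi := (class2 n hn f3 π1 π2 hmap B hBπ (i, j, k)).1 ⟨hc, hj, hnn⟩
  rw [← hphi]
  exact phi2_mem n hn f3 π1 π2 hmap B hBπ

lemma support_Q' (n : ℕ) (hn : 1 ≤ n) (f3 : ℕ → ℕ) (π1 π2 : Finset (Finset ℕ))
    (hmap : IsLOPH n f3 π1 π2) (i j k : ℕ) (h : countQ' f3 π1 π2 i j k ≠ 0) :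
    (i, j, k) ∈ S3 n := by
  obtain ⟨B, hB⟩ := Finset.card_ne_zero.1 h
  rw [Finset.mem_filter] at hB
  obtain ⟨hBπ, _, hc, hj, hnn⟩ := hB
  have hphi := (class2 n hn f3 π1 π2 hmap B hBπ (i, j, k)).1 ⟨hc, hj, hnn⟩
  rw [← hphi]
  exact phi2_mem n hn f3 π1 π2 hmap B hBπ


/-- **Necessary conditions on the classification arrays** of a locally orientable
partitioned hypermap of type `(ν,ρ)`. -/
theorem classification_conditions (n : ℕ) (hn : 1 ≤ n) (ν ρ : Nat.Partition n)
    (f3 : ℕ → ℕ) (π1 π2 : Finset (Finset ℕ))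
    (hmap : IsLOPH n f3 π1 π2)
    (hν : halfType π1 = ν.parts) (hρ : halfType π2 = ρ.parts)
    (P P' Q Q' : ℕ × ℕ × ℕ → ℕ)
    (hP : ∀ i j k : ℕ, P (i, j, k) = countP f3 π1 π2 i j k)
    (hP' : ∀ i j k : ℕ, P' (i, j, k) = countP' f3 π1 π2 i j k)
    (hQ : ∀ i j k : ℕ, Q (i, j, k) = countQ f3 π1 π2 i j k)
    (hQ' : ∀ i j k : ℕ, Q' (i, j, k) = countQ' f3 π1 π2 i j k) :
    (∀ i : ℕ, ν.parts.count i = ∑ᶠ jk : ℕ × ℕ, (P (i, jk.1, jk.2) + P' (i, jk.1, jk.2))) ∧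
    (∀ i : ℕ, ρ.parts.count i = ∑ᶠ jk : ℕ × ℕ, (Q (i, jk.1, jk.2) + Q' (i, jk.1, jk.2))) ∧
    (∑ᶠ t : ℕ × ℕ × ℕ, (t.2.1 + t.2.2) * (P t + P' t) =
      ∑ᶠ t : ℕ × ℕ × ℕ, (t.2.1 + t.2.2) * (Q t + Q' t)) ∧
    (∑ᶠ t : ℕ × ℕ × ℕ, Q' t = ∑ᶠ t : ℕ × ℕ × ℕ, t.2.1 * (P t + P' t)) ∧
    (∑ᶠ t : ℕ × ℕ × ℕ, P' t = ∑ᶠ t : ℕ × ℕ × ℕ, t.2.1 * (Q t + Q' t)) ∧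
    1 ≤ ∑ᶠ t : ℕ × ℕ × ℕ, P t := by
  classical
  have hPt : ∀ t : ℕ × ℕ × ℕ, P t = countP f3 π1 π2 t.1 t.2.1 t.2.2 := fun t => hP t.1 t.2.1 t.2.2
  have hP't : ∀ t : ℕ × ℕ × ℕ, P' t = countP' f3 π1 π2 t.1 t.2.1 t.2.2 := fun t => hP' t.1 t.2.1 t.2.2
  have hQt : ∀ t : ℕ × ℕ × ℕ, Q t = countQ f3 π1 π2 t.1 t.2.1 t.2.2 := fun t => hQ t.1 t.2.1 t.2.2
  have hQ't : ∀ t : ℕ × ℕ × ℕ, Q' t = countQ' f3 π1 π2 t.1 t.2.1 t.2.2 := fun t => hQ' t.1 t.2.1 t.2.2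
  refine ⟨?_, ?_, ?_, ?_, ?_, ?_⟩
  · -- (a) for ν
    intro i
    rw [← hν, halfType_count]
    have hsupp : (Function.support fun jk : ℕ × ℕ => P (i, jk.1, jk.2) + P' (i, jk.1, jk.2))
        ⊆ ↑(Finset.range (2 * n + 1) ×ˢ Finset.range (2 * n + 1)) := by
      intro jk hjk
      rw [Function.mem_support] at hjk
      have hne : countP f3 π1 π2 i jk.1 jk.2 ≠ 0 ∨ countP' f3 π1 π2 i jk.1 jk.2 ≠ 0 := by
        rw [hP i jk.1 jk.2, hP' i jk.1 jk.2] at hjk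
        omega
      have hmem : (i, jk.1, jk.2) ∈ S3 n :=
        hne.elim (support_P n hn f3 π1 π2 hmap i jk.1 jk.2)
          (support_P' n hn f3 π1 π2 hmap i jk.1 jk.2)
      rw [S3, Finset.mem_product] at hmem
      have h2 := hmem.2
      rw [Finset.mem_coe]
      exact h2
    rw [finsum_eq_finset_sum_of_support_subset _ hsupp]
    have hcongr : ∑ jk ∈ Finset.range (2 * n + 1) ×ˢ Finset.range (2 * n + 1),
        (P (i, jk.1, jk.2) + P' (i, jk.1, jk.2))
        = ∑ jk ∈ Finset.range (2 * n + 1) ×ˢ Finset.range (2 * n + 1),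
          (countP f3 π1 π2 i jk.1 jk.2 + countP' f3 π1 π2 i jk.1 jk.2) :=
      Finset.sum_congr rfl (fun jk _ => by rw [hP i jk.1 jk.2, hP' i jk.1 jk.2])
    rw [hcongr, sum_jk_P n hn f3 π1 π2 hmap i]
  · -- (a) for ρ
    intro i
    rw [← hρ, halfType_count]
    have hsupp : (Function.support fun jk : ℕ × ℕ => Q (i, jk.1, jk.2) + Q' (i, jk.1, jk.2))
        ⊆ ↑(Finset.range (2 * n + 1) ×ˢ Finset.range (2 * n + 1)) := by
      intro jk hjk
      rw [Function.mem_support] at hjk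
      have hne : countQ f3 π1 π2 i jk.1 jk.2 ≠ 0 ∨ countQ' f3 π1 π2 i jk.1 jk.2 ≠ 0 := by
        rw [hQ i jk.1 jk.2, hQ' i jk.1 jk.2] at hjk
        omega
      have hmem : (i, jk.1, jk.2) ∈ S3 n :=
        hne.elim (support_Q n hn f3 π1 π2 hmap i jk.1 jk.2)
          (support_Q' n hn f3 π1 π2 hmap i jk.1 jk.2)
      rw [S3, Finset.mem_product] at hmem
      have h2 := hmem.2
      rw [Finset.mem_coe]
      exact h2
    rw [finsum_eq_finset_sum_of_support_subset _ hsupp]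
    have hcongr : ∑ jk ∈ Finset.range (2 * n + 1) ×ˢ Finset.range (2 * n + 1),
        (Q (i, jk.1, jk.2) + Q' (i, jk.1, jk.2))
        = ∑ jk ∈ Finset.range (2 * n + 1) ×ˢ Finset.range (2 * n + 1),
          (countQ f3 π1 π2 i jk.1 jk.2 + countQ' f3 π1 π2 i jk.1 jk.2) :=
      Finset.sum_congr rfl (fun jk _ => by rw [hQ i jk.1 jk.2, hQ' i jk.1 jk.2])
    rw [hcongr, sum_jk_Q n hn f3 π1 π2 hmap i]
  · -- (b)
    have hsuppL : (Function.support fun t : ℕ × ℕ × ℕ => (t.2.1 + t.2.2) * (P t + P' t))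
        ⊆ ↑(S3 n) := by
      intro t ht
      rw [Function.mem_support] at ht
      have hne : countP f3 π1 π2 t.1 t.2.1 t.2.2 ≠ 0 ∨ countP' f3 π1 π2 t.1 t.2.1 t.2.2 ≠ 0 := by
        rw [hPt t, hP't t] at ht
        by_contra hcon
        push_neg at hcon
        rw [hcon.1, hcon.2] at ht
        simp at ht
      rw [Finset.mem_coe]
      exact hne.elim (support_P n hn f3 π1 π2 hmap t.1 t.2.1 t.2.2)
        (support_P' n hn f3 π1 π2 hmap t.1 t.2.1 t.2.2)
    have hsuppR : (Function.support fun t : ℕ × ℕ × ℕ => (t.2.1 + t.2.2) * (Q t + Q' t))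
        ⊆ ↑(S3 n) := by
      intro t ht
      rw [Function.mem_support] at ht
      have hne : countQ f3 π1 π2 t.1 t.2.1 t.2.2 ≠ 0 ∨ countQ' f3 π1 π2 t.1 t.2.1 t.2.2 ≠ 0 := by
        rw [hQt t, hQ't t] at ht
        by_contra hcon
        push_neg at hcon
        rw [hcon.1, hcon.2] at ht
        simp at ht
      rw [Finset.mem_coe]
      exact hne.elim (support_Q n hn f3 π1 π2 hmap t.1 t.2.1 t.2.2)
        (support_Q' n hn f3 π1 π2 hmap t.1 t.2.1 t.2.2)
    rw [finsum_eq_finset_sum_of_support_subset _ hsuppL,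
      finsum_eq_finset_sum_of_support_subset _ hsuppR]
    have hL : ∑ t ∈ S3 n, (t.2.1 + t.2.2) * (P t + P' t)
        = ∑ B ∈ π1, nnPairs f3 B := by
      have e1 : ∑ t ∈ S3 n, (t.2.1 + t.2.2) * (P t + P' t)
          = ∑ t ∈ S3 n, (t.2.1 + t.2.2) *
            (countP f3 π1 π2 t.1 t.2.1 t.2.2 + countP' f3 π1 π2 t.1 t.2.1 t.2.2) :=
        Finset.sum_congr rfl (fun t _ => by rw [hPt t, hP't t])
      rw [e1, sum_t_PP' n hn f3 π1 π2 hmap (fun t => t.2.1 + t.2.2)]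
      apply Finset.sum_congr rfl
      intro B hB
      have hj := (jCount1_facts n hn f3 π1 π2 hmap B hB).2
      simp only [phi1]
      omega
    have hR : ∑ t ∈ S3 n, (t.2.1 + t.2.2) * (Q t + Q' t)
        = ∑ B ∈ π2, hhPairs f3 B := by
      have e1 : ∑ t ∈ S3 n, (t.2.1 + t.2.2) * (Q t + Q' t)
          = ∑ t ∈ S3 n, (t.2.1 + t.2.2) *
            (countQ f3 π1 π2 t.1 t.2.1 t.2.2 + countQ' f3 π1 π2 t.1 t.2.1 t.2.2) :=
        Finset.sum_congr rfl (fun t _ => by rw [hQt t, hQ't t])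
      rw [e1, sum_t_QQ' n hn f3 π1 π2 hmap (fun t => t.2.1 + t.2.2)]
      apply Finset.sum_congr rfl
      intro B hB
      have hj := (jCount2_facts n hn f3 π1 π2 hmap B hB).2
      simp only [phi2]
      omega
    rw [hL, hR]
    exact bridge_b n hn f3 π1 π2 hmap
  · -- (c)
    have hsuppL : (Function.support fun t : ℕ × ℕ × ℕ => Q' t) ⊆ ↑(S3 n) := by
      intro t ht
      rw [Function.mem_support] at ht
      rw [hQ't t] at ht
      rw [Finset.mem_coe]
      exact support_Q' n hn f3 π1 π2 hmap t.1 t.2.1 t.2.2 ht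
    have hsuppR : (Function.support fun t : ℕ × ℕ × ℕ => t.2.1 * (P t + P' t)) ⊆ ↑(S3 n) := by
      intro t ht
      rw [Function.mem_support] at ht
      have hne : countP f3 π1 π2 t.1 t.2.1 t.2.2 ≠ 0 ∨ countP' f3 π1 π2 t.1 t.2.1 t.2.2 ≠ 0 := by
        rw [hPt t, hP't t] at ht
        by_contra hcon
        push_neg at hcon
        rw [hcon.1, hcon.2] at ht
        simp at ht
      rw [Finset.mem_coe]
      exact hne.elim (support_P n hn f3 π1 π2 hmap t.1 t.2.1 t.2.2)
        (support_P' n hn f3 π1 π2 hmap t.1 t.2.1 t.2.2)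
    rw [finsum_eq_finset_sum_of_support_subset _ hsuppL,
      finsum_eq_finset_sum_of_support_subset _ hsuppR]
    have hL : ∑ t ∈ S3 n, Q' t = (π2.filter fun B => f3 (maxEven B) % 2 = 0).card := by
      have e1 : ∑ t ∈ S3 n, Q' t
          = ∑ t ∈ S3 n, (π2.filter fun B => (f3 (maxEven B) % 2 = 0) ∧ B.card = 2 * t.1 ∧
              jCount2 f3 π1 B = t.2.1 ∧ hhPairs f3 B = t.2.1 + t.2.2).card :=
        Finset.sum_congr rfl (fun t _ => by rw [hQ't t]; rfl)
      rw [e1]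
      exact sum_t_single_pi2 n hn f3 π1 π2 hmap (fun B => f3 (maxEven B) % 2 = 0)
    have hR : ∑ t ∈ S3 n, t.2.1 * (P t + P' t)
        = (π2.filter fun B => f3 (maxEven B) % 2 = 0).card := by
      have e1 : ∑ t ∈ S3 n, t.2.1 * (P t + P' t)
          = ∑ t ∈ S3 n, t.2.1 *
            (countP f3 π1 π2 t.1 t.2.1 t.2.2 + countP' f3 π1 π2 t.1 t.2.1 t.2.2) :=
        Finset.sum_congr rfl (fun t _ => by rw [hPt t, hP't t])
      rw [e1, sum_t_PP' n hn f3 π1 π2 hmap (fun t => t.2.1)]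
      exact bridge_c n hn f3 π1 π2 hmap
    rw [hL, hR]
  · -- (d)
    have hsuppL : (Function.support fun t : ℕ × ℕ × ℕ => P' t) ⊆ ↑(S3 n) := by
      intro t ht
      rw [Function.mem_support] at ht
      rw [hP't t] at ht
      rw [Finset.mem_coe]
      exact support_P' n hn f3 π1 π2 hmap t.1 t.2.1 t.2.2 ht
    have hsuppR : (Function.support fun t : ℕ × ℕ × ℕ => t.2.1 * (Q t + Q' t)) ⊆ ↑(S3 n) := by
      intro t ht
      rw [Function.mem_support] at ht
      have hne : countQ f3 π1 π2 t.1 t.2.1 t.2.2 ≠ 0 ∨ countQ' f3 π1 π2 t.1 t.2.1 t.2.2 ≠ 0 := by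
        rw [hQt t, hQ't t] at ht
        by_contra hcon
        push_neg at hcon
        rw [hcon.1, hcon.2] at ht
        simp at ht
      rw [Finset.mem_coe]
      exact hne.elim (support_Q n hn f3 π1 π2 hmap t.1 t.2.1 t.2.2)
        (support_Q' n hn f3 π1 π2 hmap t.1 t.2.1 t.2.2)
    rw [finsum_eq_finset_sum_of_support_subset _ hsuppL,
      finsum_eq_finset_sum_of_support_subset _ hsuppR]
    have hL : ∑ t ∈ S3 n, P' t
        = (π1.filter fun B => 1 ∉ B ∧ f3 (maxOdd B) % 2 = 1).card := by
      have e1 : ∑ t ∈ S3 n, P' t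
          = ∑ t ∈ S3 n, (π1.filter fun B => (1 ∉ B ∧ f3 (maxOdd B) % 2 = 1) ∧ B.card = 2 * t.1 ∧
              jCount1 f3 π2 B = t.2.1 ∧ nnPairs f3 B = t.2.1 + t.2.2).card :=
        Finset.sum_congr rfl (fun t _ => by rw [hP't t]; rfl)
      rw [e1]
      exact sum_t_single_pi1 n hn f3 π1 π2 hmap (fun B => 1 ∉ B ∧ f3 (maxOdd B) % 2 = 1)
    have hR : ∑ t ∈ S3 n, t.2.1 * (Q t + Q' t)
        = (π1.filter fun B => 1 ∉ B ∧ f3 (maxOdd B) % 2 = 1).card := by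
      have e1 : ∑ t ∈ S3 n, t.2.1 * (Q t + Q' t)
          = ∑ t ∈ S3 n, t.2.1 *
            (countQ f3 π1 π2 t.1 t.2.1 t.2.2 + countQ' f3 π1 π2 t.1 t.2.1 t.2.2) :=
        Finset.sum_congr rfl (fun t _ => by rw [hQt t, hQ't t])
      rw [e1, sum_t_QQ' n hn f3 π1 π2 hmap (fun t => t.2.1)]
      exact bridge_d n hn f3 π1 π2 hmap
    rw [hL, hR]
  · -- (e)
    have h1g : (1 : ℕ) ∈ groundSet n := by
      rw [groundSet, Finset.mem_Icc]
      omega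
    obtain ⟨B0, ⟨hB0, h1B0⟩, _⟩ := hmap.2.1.2.2 1 h1g
    have ht0 : phi1 f3 π2 B0 ∈ S3 n := phi1_mem n hn f3 π1 π2 hmap B0 hB0
    have hcls := (class1 n hn f3 π1 π2 hmap B0 hB0 (phi1 f3 π2 B0)).2 rfl
    have hc : 1 ≤ countP f3 π1 π2 (phi1 f3 π2 B0).1 (phi1 f3 π2 B0).2.1 (phi1 f3 π2 B0).2.2 :=
      Finset.card_pos.2 ⟨B0, Finset.mem_filter.2
        ⟨hB0, Or.inl h1B0, hcls.1, hcls.2.1, hcls.2.2⟩⟩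
    have hsupp : (Function.support fun t : ℕ × ℕ × ℕ => P t) ⊆ ↑(S3 n) := by
      intro t ht
      rw [Function.mem_support] at ht
      rw [hPt t] at ht
      rw [Finset.mem_coe]
      exact support_P n hn f3 π1 π2 hmap t.1 t.2.1 t.2.2 ht
    rw [finsum_eq_finset_sum_of_support_subset _ hsupp]
    calc 1 ≤ P (phi1 f3 π2 B0) := by rw [hPt (phi1 f3 π2 B0)]; exact hc
      _ ≤ ∑ t ∈ S3 n, P t := Finset.single_le_sum (fun _ _ => Nat.zero_le _) ht0
end

section
/- Let X be a finite set and let f and g be fixed-point-free involutions of X. Then for every k ≥ 1, the number of orbits of the permutation f∘g on X having exactly k elements is even. Equivalently, the cycle type of f∘g (counting fixed points as cycles of length 1) is of the form λλ = (λ1,λ1,λ2,λ2,…), i.e., every part occurs an even number of times. -/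
/-!
Put `c = f * g`. Conjugation by `f` inverts `c`, so `f` maps each cycle of `c` onto a cycle of the
same size, and `S ↦ f '' S` is an involution on the cycles of each size. It has no fixed cycle:
if `f x = c ^ n x`, then `f * c ^ n` fixes `x`, but in the dihedral group generated by `f` and `g`
every such element is conjugate to `f` or to `g`, which have no fixed points. Hence the cycles of
each size come in pairs.
-/

/-- The (forward) orbit of `x` under a permutation `h` of a finite set. -/
def permOrbit {X : Type*} (h : Equiv.Perm X) (x : X) : Set X :=
  { y | ∃ m : ℕ, (⇑h)^[m] x = y }

open Equiv Equiv.Perm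

theorem Set.even_ncard_of_involution {α : Type*} {s : Set α} (hs : s.Finite) (σ : α → α)
    (hmaps : Set.MapsTo σ s s) (hinv : ∀ a ∈ s, σ (σ a) = a) (hfree : ∀ a ∈ s, σ a ≠ a) :
    Even s.ncard := by
  classical
  have hsum : ∑ _ ∈ hs.toFinset, (1 : ZMod 2) = 0 :=
    Finset.sum_involution (fun a _ => σ a) (fun _ _ => by decide)
      (fun a ha _ => hfree a (hs.mem_toFinset.1 ha))
      (fun a ha => hs.mem_toFinset.2 (hmaps (hs.mem_toFinset.1 ha)))
      (fun a ha => hinv a (hs.mem_toFinset.1 ha))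
  rw [Finset.sum_const, nsmul_eq_mul, mul_one, ZMod.natCast_eq_zero_iff] at hsum
  rw [Set.ncard_eq_toFinset_card _ hs]
  exact even_iff_two_dvd.2 hsum

section Dihedral

variable {G : Type*} [Group G] {f g : G}

theorem conj_mul_eq_inv (hf : f * f = 1) (hg : g * g = 1) : f * (f * g) * f⁻¹ = (f * g)⁻¹ := by
  rw [inv_eq_of_mul_eq_one_right hf, mul_inv_rev, inv_eq_of_mul_eq_one_right hf,
    inv_eq_of_mul_eq_one_right hg, ← mul_assoc, hf, one_mul]

theorem mul_zpow_eq_zpow_neg_mul (hf : f * f = 1) (hg : g * g = 1) (n : ℤ) :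
    f * (f * g) ^ n = (f * g) ^ (-n) * f := by
  have hconj := map_zpow (MulAut.conj f) (f * g) n
  rw [MulAut.conj_apply, MulAut.conj_apply, conj_mul_eq_inv hf hg, inv_zpow'] at hconj
  rw [← hconj, inv_mul_cancel_right]

theorem isConj_mul_zpow (hf : f * f = 1) (hg : g * g = 1) (n : ℤ) :
    IsConj f (f * (f * g) ^ n) ∨ IsConj g (f * (f * g) ^ n) := by
  obtain ⟨j, rfl | rfl⟩ := Int.even_or_odd' n
  · refine .inl (isConj_iff.2 ⟨(f * g) ^ (-j), ?_⟩)
    calc (f * g) ^ (-j) * f * ((f * g) ^ (-j))⁻¹ = (f * g) ^ (-j) * f * (f * g) ^ j := by group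
      _ = f * (f * g) ^ (2 * j) := by rw [← mul_zpow_eq_zpow_neg_mul hf hg]; group
  · refine .inr (isConj_iff.2 ⟨(f * g) ^ (-j), ?_⟩)
    calc (f * g) ^ (-j) * g * ((f * g) ^ (-j))⁻¹ = (f * g) ^ (-j) * (f * f) * g * (f * g) ^ j := by
          rw [hf]; group
      _ = (f * g) ^ (-j) * f * ((f * g) * (f * g) ^ j) := by simp only [mul_assoc]
      _ = f * (f * g) ^ (2 * j + 1) := by rw [← mul_zpow_eq_zpow_neg_mul hf hg]; group

end Dihedral

section Perm

variable {X : Type*}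

theorem IsConj.perm_apply_ne_self {τ ρ : Perm X} (h : IsConj τ ρ) (hτ : ∀ x, τ x ≠ x) (y : X) :
    ρ y ≠ y := by
  obtain ⟨c, rfl⟩ := isConj_iff.1 h
  intro hy
  apply hτ (c⁻¹ y)
  simpa only [Perm.mul_apply, Perm.inv_eq_iff_eq, eq_comm] using hy

theorem Equiv.Perm.not_sameCycle_mul_apply {f g : Perm X} (hf : f * f = 1) (hg : g * g = 1)
    (hf' : ∀ x, f x ≠ x) (hg' : ∀ x, g x ≠ x) (x : X) : ¬(f * g).SameCycle x (f x) := by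
  rintro ⟨n, hn⟩
  have hfix : (f * (f * g) ^ n) x = x := by rw [Perm.mul_apply, hn, ← Perm.mul_apply, hf, one_apply]
  rcases isConj_mul_zpow hf hg n with h | h
  exacts [h.perm_apply_ne_self hf' x hfix, h.perm_apply_ne_self hg' x hfix]

theorem Equiv.Perm.image_setOf_sameCycle {c σ : Perm X} (hσ : σ * c * σ⁻¹ = c⁻¹) (x : X) :
    σ '' {y | c.SameCycle x y} = {y | c.SameCycle (σ x) y} := by
  ext y
  rw [Equiv.image_eq_preimage_symm]
  show c.SameCycle x (σ⁻¹ y) ↔ c.SameCycle (σ x) y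
  rw [← sameCycle_inv (f := c) (x := σ x), ← hσ, sameCycle_conj, ← Perm.mul_apply, inv_mul_cancel,
    one_apply]

theorem permOrbit_eq_setOf_sameCycle [Finite X] (h : Perm X) (x : X) :
    permOrbit h x = {y | h.SameCycle x y} := by
  ext y
  constructor
  · rintro ⟨m, rfl⟩
    exact ⟨m, by rw [zpow_natCast, ← iterate_eq_pow]⟩
  · intro hxy
    obtain ⟨m, hm⟩ := hxy.exists_nat_pow_eq
    exact ⟨m, by rwa [iterate_eq_pow]⟩

end Perm

theorem even_card_orbits_of_involutions_general {X : Type*} [Fintype X]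
    (f g : Equiv.Perm X)
    (hf : ∀ x, f (f x) = x) (hf' : ∀ x, f x ≠ x)
    (hg : ∀ x, g (g x) = x) (hg' : ∀ x, g x ≠ x)
    (k : ℕ) :
    Even (Set.ncard { S : Set X | (∃ x : X, S = permOrbit (f * g) x) ∧ S.ncard = k }) := by
  have hff : f * f = 1 := Equiv.ext hf
  have hgg : g * g = 1 := Equiv.ext hg
  have himage (x : X) : f '' permOrbit (f * g) x = permOrbit (f * g) (f x) := by
    simp only [permOrbit_eq_setOf_sameCycle]
    exact image_setOf_sameCycle (conj_mul_eq_inv hff hgg) x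
  refine Set.even_ncard_of_involution (Set.toFinite _) (f '' ·) ?_ ?_ ?_
  · rintro _ ⟨⟨x, rfl⟩, rfl⟩
    exact ⟨⟨f x, himage x⟩, Set.ncard_image_of_injective _ f.injective⟩
  · intro S _
    simp only [Set.image_image, hf, Set.image_id']
  · rintro _ ⟨⟨x, rfl⟩, -⟩ hfix
    have hx : f x ∈ permOrbit (f * g) x := hfix ▸ Set.mem_image_of_mem f ⟨0, rfl⟩
    rw [permOrbit_eq_setOf_sameCycle] at hx
    exact not_sameCycle_mul_apply hff hgg hf' hg' x hx

/-- If `f` and `g` are fixed-point-free involutions of a finite set `X`, then for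
every `k ≥ 1` the number of orbits of `f∘g` with exactly `k` elements is even,
i.e. the cycle type of `f∘g` (fixed points counted as cycles of length 1) has
every part occurring an even number of times. -/
theorem even_card_orbits_of_involutions {X : Type*} [Fintype X]
    (f g : Equiv.Perm X)
    (hf : ∀ x, f (f x) = x) (hf' : ∀ x, f x ≠ x)
    (hg : ∀ x, g (g x) = x) (hg' : ∀ x, g x ≠ x)
    (k : ℕ) (hk : 1 ≤ k) :
    Even (Set.ncard { S : Set X | (∃ x : X, S = permOrbit (f * g) x) ∧ S.ncard = k }) :=
  even_card_orbits_of_involutions_general f g hf hf' hg hg' k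
end
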